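/- arXiv:math/0504572 — 12 statements merged into one kernel-verified Lean document; each statement's English description precedes it below -/
import Mathlib

section
/- Let B be an n-by-n matrix with entries ±1 satisfying B² = kB for a positive integer k, with all entries in the first column equal to 1. Then the number of negative entries in each row of B is the same constant u, and n - k = 2u; in particular n and k have the same parity. -/
/-!
Entry `(i, 0)` of `B * B = k • B` says that every row of `B` sums to `k`, while a `±1` row with
`u` entries `-1` sums to `n - 2u`.
-/

open Finset

theorem Matrix.sum_row_eq_of_mul_self_eq_smul {ι α : Type*} [Fintype ι] [NonAssocSemiring α]
    {B : Matrix ι ι α} {c : α} (hB : B * B = c • B) {j₀ : ι} (hcol : ∀ i, B i j₀ = 1) (i : ι) :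
    ∑ j, B i j = c := by
  have h := congrFun (congrFun hB i) j₀
  simpa only [Matrix.mul_apply, Matrix.smul_apply, hcol, mul_one, smul_eq_mul] using h

theorem sum_eq_card_sub_two_mul_card_filter_eq_neg_one {ι : Type*} [Fintype ι] {v : ι → ℤ}
    (hv : ∀ j, v j = 1 ∨ v j = -1) :
    ∑ j, v j = Fintype.card ι - 2 * #{j | v j = -1} := by
  have hsplit : ∀ j, v j = 1 - 2 * if v j = -1 then 1 else 0 := fun j => by
    rcases hv j with h | h <;> simp [h]
  rw [sum_congr rfl fun j _ => hsplit j, sum_sub_distrib, ← mul_sum, sum_boole]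
  simp

theorem stmt_2_general (n k : ℕ) (hn : 0 < n)
    (B : Matrix (Fin n) (Fin n) ℤ)
    (hpm : ∀ i j, B i j = 1 ∨ B i j = -1)
    (hB : B * B = (k : ℤ) • B)
    (hcol : ∀ i, B i ⟨0, hn⟩ = 1) :
    ∃ u : ℕ, (∀ i : Fin n,
        (Finset.univ.filter (fun j => B i j = -1)).card = u) ∧
      n = k + 2 * u := by
  have hrow : ∀ i, (n : ℤ) - 2 * #{j | B i j = -1} = k := fun i => by
    rw [← Matrix.sum_row_eq_of_mul_self_eq_smul hB hcol i,
      sum_eq_card_sub_two_mul_card_filter_eq_neg_one (hpm i), Fintype.card_fin]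
  refine ⟨#{j | B ⟨0, hn⟩ j = -1}, fun i => ?_, ?_⟩
  · have := hrow i
    have := hrow ⟨0, hn⟩
    omega
  · have := hrow ⟨0, hn⟩
    omega

theorem stmt_2 (n k : ℕ) (hn : 0 < n) (hk : 0 < k)
    (B : Matrix (Fin n) (Fin n) ℤ)
    (hpm : ∀ i j, B i j = 1 ∨ B i j = -1)
    (hB : B * B = (k : ℤ) • B)
    (hcol : ∀ i, B i ⟨0, hn⟩ = 1) :
    ∃ u : ℕ, (∀ i : Fin n,
        (Finset.univ.filter (fun j => B i j = -1)).card = u) ∧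
      n = k + 2 * u :=
  stmt_2_general n k hn B hpm hB hcol
end

section
/- Let A be an n-by-n absolutely flat idempotent with constant 1/k and rank r, and let m be the number of negative diagonal entries of A. Then n = rk + 2m. -/
/-! The trace of an idempotent matrix is its rank, while diagonal entries `±1/k`, `m` of them
negative, give trace `(n - 2m)/k`. -/

open Finset

theorem Matrix.trace_eq_rank_of_isIdempotentElem {K ι : Type*} [Field K] [Fintype ι]
    [DecidableEq ι] {A : Matrix ι ι K} (hA : IsIdempotentElem A) : A.trace = A.rank := by
  have hf : IsIdempotentElem (Matrix.toLin' A) := hA.map Matrix.toLinAlgEquiv'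
  rw [← Matrix.trace_toLin'_eq, (LinearMap.IsIdempotentElem.isProj_range _ hf).trace]
  rfl

theorem Matrix.trace_eq_of_diag_eq_or_eq_neg {R ι : Type*} [CommRing R] [DecidableEq R]
    [Fintype ι] {A : Matrix ι ι R} {c : R} (hA : ∀ i, A i i = c ∨ A i i = -c) :
    A.trace = (Fintype.card ι - 2 * #{i | A i i = -c}) * c := by
  have hpos : ∀ i ∈ ({i | ¬A i i = -c} : Finset ι), A i i = c := fun i hi =>
    (hA i).resolve_right (mem_filter.mp hi).2
  simp only [Matrix.trace, Matrix.diag_apply]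
  rw [← sum_filter_add_sum_filter_not univ (fun i => A i i = -c),
    sum_eq_card_nsmul fun i hi => (mem_filter.mp hi).2, sum_eq_card_nsmul hpos, nsmul_eq_mul,
    nsmul_eq_mul, ← card_univ, ← card_filter_add_card_filter_not (s := univ) fun i => A i i = -c]
  push_cast
  ring

theorem stmt_3 (n k : ℕ) (hk : 0 < k) (A : Matrix (Fin n) (Fin n) ℝ)
    (hidem : A * A = A)
    (hpm : ∀ i j, A i j = 1 / k ∨ A i j = -(1 / k))
    (r m : ℕ) (hr : A.rank = r)
    (hm : (Finset.univ.filter (fun i : Fin n => A i i = -(1 / k))).card = m) :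
    n = r * k + 2 * m := by
  have htrace := Matrix.trace_eq_of_diag_eq_or_eq_neg (fun i => hpm i i)
  rw [Matrix.trace_eq_rank_of_isIdempotentElem hidem, hr, hm, Fintype.card_fin] at htrace
  have hk' : (k : ℝ) ≠ 0 := by positivity
  field_simp at htrace
  exact_mod_cast (by linarith : (n : ℝ) = r * k + 2 * m)
end

section
/- If A is an n-by-n absolutely flat idempotent with constant 1/k and rank r, then rk ≤ n. -/
theorem stmt_4 (n k : ℕ) (hk : 0 < k) (A : Matrix (Fin n) (Fin n) ℝ)
    (hidem : A * A = A)
    (hpm : ∀ i j, A i j = 1 / k ∨ A i j = -(1 / k)) :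
    A.rank * k ≤ n := by
  set f := A.mulVecLin with hf
  have hff : f ∘ₗ f = f := by
    rw [hf, ← Matrix.mulVecLin_mul, hidem]
  have hproj : LinearMap.IsProj (LinearMap.range f) f := by
    constructor
    · intro x; exact LinearMap.mem_range_self f x
    · rintro x ⟨y, rfl⟩
      exact congrFun (congrArg DFunLike.coe hff) y
  have htr : LinearMap.trace ℝ (Fin n → ℝ) f = (A.rank : ℝ) := by
    rw [hproj.trace]
    rfl
  have htr2 : LinearMap.trace ℝ (Fin n → ℝ) f = A.trace := by
    rw [LinearMap.trace_eq_matrix_trace ℝ (Pi.basisFun ℝ (Fin n))]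
    congr 1
    rw [hf]
    ext i j
    simp [LinearMap.toMatrix, Matrix.mulVecLin, Matrix.mulVec, dotProduct,
      Pi.basisFun_apply]
  have hbound : A.trace ≤ (n : ℝ) / k := by
    rw [Matrix.trace]
    have : ∀ i : Fin n, A.diag i ≤ 1 / k := by
      intro i
      rcases hpm i i with h | h <;> rw [Matrix.diag_apply, h]
      have : (0:ℝ) < 1 / k := by positivity
      linarith
    calc ∑ i, A.diag i ≤ ∑ _i : Fin n, (1:ℝ)/k := Finset.sum_le_sum fun i _ => this i
      _ = (n : ℝ) / k := by simp [div_eq_mul_inv, mul_comm]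
  have hr : (A.rank : ℝ) ≤ (n : ℝ) / k := by rw [← htr, htr2] at *; linarith [hbound]
  have hk' : (0:ℝ) < k := by exact_mod_cast hk
  have : ((A.rank * k : ℕ) : ℝ) ≤ (n : ℝ) := by
    push_cast
    calc (A.rank : ℝ) * k ≤ ((n:ℝ)/k) * k := by nlinarith
      _ = n := div_mul_cancel₀ _ (ne_of_gt hk')
  exact_mod_cast this
end

section
/- If n is odd and A is an n-by-n absolutely flat idempotent with constant 1/k and rank r, then r = 1 and k is odd. -/
/-!
Put `S = k • A`, an integer matrix with entries `±1` and `S * S = k • S`. The diagonal entry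
`(S * S) i i` is a sum of `n` odd terms and equals `k * S i i`, so `k ≡ n ≡ 1 (mod 2)`.

Every column of `S` is a `k`-eigenvector of `S`. If two columns `u`, `v` satisfied `u ≠ v` and
`u ≠ -v`, pick a row `r` of `S` at a coordinate where `u - v` vanishes: then `r ⬝ᵥ (u - v) = 0`,
a sum of `±2`'s over the coordinates where `u ≠ v`, so there is an even number of them.
Symmetrically, with `u + v`, there is an even number of coordinates where `u = v`, and `n` would be
even. Hence all columns are `±` one column, and `A` is a nonzero outer product, of rank one.
-/

open Finset Matrix

theorem Finset.even_sum_iff_even_card_of_odd {ι : Type*} {s : Finset ι} {f : ι → ℤ}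
    (hf : ∀ i ∈ s, Odd (f i)) : Even (∑ i ∈ s, f i) ↔ Even #s := by
  have hsub : Even (∑ i ∈ s, (f i - 1)) :=
    Finset.even_sum _ fun i hi => by simpa [Int.even_sub_one, Int.not_even_iff_odd] using hf i hi
  have hsplit : ∑ i ∈ s, f i = ∑ i ∈ s, (f i - 1) + #s := by simp [Finset.sum_sub_distrib]
  rw [hsplit, Int.even_add, iff_true_left hsub, Int.even_coe_nat]

theorem Int.odd_of_eq_one_or_eq_neg_one {a : ℤ} (ha : a = 1 ∨ a = -1) : Odd a := by
  rcases ha with rfl | rfl <;> decide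

theorem even_card_ne_of_dotProduct_sub_eq_zero {ι : Type*} [Fintype ι] {r u v : ι → ℤ}
    (hr : ∀ l, r l = 1 ∨ r l = -1) (hu : ∀ l, u l = 1 ∨ u l = -1) (hv : ∀ l, v l = 1 ∨ v l = -1)
    (h : r ⬝ᵥ (u - v) = 0) : Even #{l | u l ≠ v l} := by
  have hsum : r ⬝ᵥ (u - v) = 2 * ∑ l with u l ≠ v l, r l * u l := by
    rw [dotProduct, ← Finset.sum_filter_of_ne (p := fun l => u l ≠ v l), Finset.mul_sum]
    · refine Finset.sum_congr rfl fun l hl => ?_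
      have hvl : v l = -u l := by
        have := (Finset.mem_filter.mp hl).2
        rcases hu l with h1 | h1 <;> rcases hv l with h2 | h2 <;> simp_all
      simp only [Pi.sub_apply, hvl]
      ring
    · intro l _ hl heq
      simp [heq] at hl
  rw [← Finset.even_sum_iff_even_card_of_odd fun l _ =>
    (Int.odd_of_eq_one_or_eq_neg_one (hr l)).mul (Int.odd_of_eq_one_or_eq_neg_one (hu l)),
    show ∑ l with u l ≠ v l, r l * u l = 0 by linarith]
  exact Even.zero

namespace Matrix

theorem rank_pos_of_ne_zero {m n K : Type*} [Fintype n] [Field K] {A : Matrix m n K}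
    (hA : A ≠ 0) : 0 < A.rank := by
  classical
  rw [Nat.pos_iff_ne_zero, rank, Ne, Submodule.finrank_eq_zero, LinearMap.range_eq_bot]
  refine fun h => hA (Matrix.ext fun i j => ?_)
  simpa using congrFun (LinearMap.congr_fun h (Pi.single j 1)) i

theorem rank_vecMulVec_eq_one {m n K : Type*} [Fintype n] [Field K] {w : m → K} {v : n → K}
    (hw : w ≠ 0) (hv : v ≠ 0) : (vecMulVec w v).rank = 1 := by
  refine le_antisymm (rank_vecMulVec_le w v) (rank_pos_of_ne_zero ?_)
  obtain ⟨i, hi⟩ := Function.ne_iff.mp hw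
  obtain ⟨j, hj⟩ := Function.ne_iff.mp hv
  intro h
  exact mul_ne_zero hi hj (by simpa [vecMulVec_apply] using congrFun₂ h i j)

theorem exists_sign_matrix_of_forall_eq_or_eq_neg {m n : Type*} {A : Matrix m n ℝ} {c : ℝ}
    (h : ∀ i j, A i j = c ∨ A i j = -c) :
    ∃ S : Matrix m n ℤ, (∀ i j, S i j = 1 ∨ S i j = -1) ∧ A = c • S.map (↑) := by
  have : ∀ i j, ∃ s : ℤ, (s = 1 ∨ s = -1) ∧ A i j = c * s := fun i j => by
    rcases h i j with h | h
    · exact ⟨1, .inl rfl, by simp [h]⟩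
    · exact ⟨-1, .inr rfl, by simp [h]⟩
  choose S hS hAS using this
  exact ⟨Matrix.of S, hS, Matrix.ext fun i j => by simp [hAS]⟩

variable {ι : Type*} [Fintype ι]

theorem mul_self_eq_smul_of_isIdempotentElem {A : Matrix ι ι ℝ} {S : Matrix ι ι ℤ} {k : ℤ}
    (hk : k ≠ 0) (hAS : A = (1 / (k : ℝ)) • S.map (↑)) (hA : IsIdempotentElem A) :
    S * S = k • S := by
  have hSA : S.map (↑) = (k : ℝ) • A := by
    rw [hAS, smul_smul, mul_one_div_cancel (by exact_mod_cast hk), one_smul]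
  apply Matrix.map_injective (f := (Int.cast : ℤ → ℝ)) Int.cast_injective
  calc (S * S).map (↑) = S.map (↑) * S.map (↑) := Matrix.map_mul (f := Int.castRingHom ℝ)
    _ = (k : ℝ) • (k : ℝ) • (A * A) := by rw [hSA, smul_mul_smul_comm, smul_smul]
    _ = (k • S).map (↑) := by rw [hA.eq, ← hSA]; ext; simp

theorem dotProduct_col_of_mul_self_eq_smul {R : Type*} [CommSemiring R] {S : Matrix ι ι R}
    {k : R} (hSS : S * S = k • S) (i j : ι) : S i ⬝ᵥ (fun l => S l j) = k * S i j := by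
  rw [← mul_apply', hSS, smul_apply, smul_eq_mul]

variable {S : Matrix ι ι ℤ} {k : ℤ}

theorem odd_of_mul_self_eq_smul (hS : ∀ i j, S i j = 1 ∨ S i j = -1) (hSS : S * S = k • S)
    (hι : Odd (Fintype.card ι)) : Odd k := by
  obtain ⟨i⟩ : Nonempty ι := Fintype.card_pos_iff.mp hι.pos
  have hodd : Odd (S i ⬝ᵥ (fun l => S l i)) := by
    rw [← Int.not_even_iff_odd, dotProduct, Finset.even_sum_iff_even_card_of_odd fun l _ =>
      (Int.odd_of_eq_one_or_eq_neg_one (hS i l)).mul (Int.odd_of_eq_one_or_eq_neg_one (hS l i)),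
      Finset.card_univ, Nat.not_even_iff_odd]
    exact hι
  rw [dotProduct_col_of_mul_self_eq_smul hSS] at hodd
  exact (Int.odd_mul.mp hodd).1

theorem col_eq_or_eq_neg_of_mul_self_eq_smul (hS : ∀ i j, S i j = 1 ∨ S i j = -1)
    (hSS : S * S = k • S) (hι : Odd (Fintype.card ι)) (j j₀ : ι) :
    (∀ i, S i j = S i j₀) ∨ (∀ i, S i j = -S i j₀) := by
  by_contra! ⟨⟨i₁, h₁⟩, ⟨i₂, h₂⟩⟩
  have hcol := dotProduct_col_of_mul_self_eq_smul hSS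
  have hsign : ∀ i, S i j = S i j₀ ∨ S i j = -S i j₀ := fun i => by
    rcases hS i j with h | h <;> rcases hS i j₀ with h' | h' <;> simp [h, h']
  have hsub : S i₂ ⬝ᵥ ((fun l => S l j) - (fun l => S l j₀)) = 0 := by
    rw [dotProduct_sub, hcol, hcol, (hsign i₂).resolve_right h₂, sub_self]
  have hadd : S i₁ ⬝ᵥ ((fun l => S l j) - -(fun l => S l j₀)) = 0 := by
    rw [sub_neg_eq_add, dotProduct_add, hcol, hcol, (hsign i₁).resolve_left h₁]
    ring
  have hne := even_card_ne_of_dotProduct_sub_eq_zero (hS i₂) (hS · j) (hS · j₀) hsub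
  have heq := even_card_ne_of_dotProduct_sub_eq_zero (hS i₁) (hS · j)
    (fun l => (hS l j₀).symm.imp neg_eq_iff_eq_neg.mpr neg_eq_iff_eq_neg.mpr) hadd
  have hcompl : #{l | S l j ≠ -S l j₀} = #{l | ¬S l j ≠ S l j₀} :=
    congrArg card <| Finset.filter_congr fun l _ => by
      rcases hS l j with h | h <;> rcases hS l j₀ with h' | h' <;> simp [h, h']
  have hcard := hne.add (hcompl ▸ heq)
  rw [Finset.card_filter_add_card_filter_not, Finset.card_univ] at hcard
  exact Nat.not_odd_iff_even.mpr hcard hι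

theorem eq_vecMulVec_of_mul_self_eq_smul (hS : ∀ i j, S i j = 1 ∨ S i j = -1)
    (hSS : S * S = k • S) (hι : Odd (Fintype.card ι)) (j₀ : ι) :
    S = vecMulVec (fun i => S i j₀) (fun j => S j₀ j₀ * S j₀ j) := by
  have hsq : S j₀ j₀ * S j₀ j₀ = 1 := by rcases hS j₀ j₀ with h | h <;> simp [h]
  ext i j
  rcases col_eq_or_eq_neg_of_mul_self_eq_smul hS hSS hι j j₀ with h | h <;>
    simp [vecMulVec_apply, h, hsq]

theorem rank_map_intCast_eq_one_of_mul_self_eq_smul {K : Type*} [Field K]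
    (hS : ∀ i j, S i j = 1 ∨ S i j = -1) (hSS : S * S = k • S) (hι : Odd (Fintype.card ι)) :
    (S.map (Int.cast : ℤ → K)).rank = 1 := by
  obtain ⟨j₀⟩ : Nonempty ι := Fintype.card_pos_iff.mp hι.pos
  have hcast : ∀ i j, (S i j : K) ≠ 0 := fun i j => by rcases hS i j with h | h <;> simp [h]
  have hmap : S.map (Int.cast : ℤ → K) =
      vecMulVec (fun i => (S i j₀ : K)) (fun j => (S j₀ j₀ * S j₀ j : K)) := by
    conv_lhs => rw [eq_vecMulVec_of_mul_self_eq_smul hS hSS hι j₀]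
    ext
    simp [vecMulVec_apply]
  rw [hmap]
  exact rank_vecMulVec_eq_one (Function.ne_iff.mpr ⟨j₀, hcast j₀ j₀⟩)
    (Function.ne_iff.mpr ⟨j₀, mul_ne_zero (hcast j₀ j₀) (hcast j₀ j₀)⟩)

end Matrix

theorem stmt_5 (n k : ℕ) (hk : 0 < k) (hn : Odd n)
    (A : Matrix (Fin n) (Fin n) ℝ)
    (hidem : A * A = A)
    (hpm : ∀ i j, A i j = 1 / k ∨ A i j = -(1 / k)) :
    A.rank = 1 ∧ Odd k := by
  obtain ⟨S, hS, hAS⟩ := exists_sign_matrix_of_forall_eq_or_eq_neg hpm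
  have hSS : S * S = (k : ℤ) • S :=
    mul_self_eq_smul_of_isIdempotentElem (by exact_mod_cast hk.ne') (by rwa [Int.cast_natCast])
      hidem
  have hcard : Odd (Fintype.card (Fin n)) := by rwa [Fintype.card_fin]
  refine ⟨?_, (Int.odd_coe_nat k).mp (odd_of_mul_self_eq_smul hS hSS hcard)⟩
  rw [hAS, rank_smul_of_mem_nonZeroDivisors _ (mem_nonZeroDivisors_of_ne_zero (by positivity)),
    rank_map_intCast_eq_one_of_mul_self_eq_smul hS hSS hcard]
end

section
/- Let C be a square ±1 matrix of even size. Then every entry of C² is divisible by 2, and more generally every entry of C^(2^q) is divisible by 2^q for all positive integers q. -/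
theorem stmt_7 (N : ℕ) (hN : Even N) (C : Matrix (Fin N) (Fin N) ℤ)
    (hpm : ∀ i j, C i j = 1 ∨ C i j = -1) :
    (∀ i j, (2 : ℤ) ∣ (C * C) i j) ∧
      ∀ q : ℕ, 0 < q → ∀ i j, (2 ^ q : ℤ) ∣ (C ^ (2 ^ q)) i j := by
  have h2 : ∀ i j, (2 : ℤ) ∣ (C * C) i j := by
    intro i j
    rw [Matrix.mul_apply]
    have hmod : ∀ k : Fin N, (C i k * C k j) % 2 = 1 := by
      intro k
      rcases hpm i k with h1 | h1 <;> rcases hpm k j with h2 | h2 <;>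
        rw [h1, h2] <;> decide
    apply Int.dvd_of_emod_eq_zero
    rw [Finset.sum_int_mod]
    simp only [hmod, Finset.sum_const, Finset.card_univ, Fintype.card_fin,
      nsmul_eq_mul, mul_one]
    obtain ⟨m, hm⟩ := hN
    subst hm
    push_cast
    omega
  refine ⟨h2, ?_⟩
  intro q hq
  induction q with
  | zero => exact absurd hq (by simp)
  | succ n ih =>
    rcases Nat.eq_zero_or_pos n with hn | hn
    · subst hn
      intro i j
      simpa [pow_one, sq] using h2 i j
    · have ihn := ih hn
      intro i j
      have hsplit : C ^ (2 ^ (n + 1)) = C ^ (2 ^ n) * C ^ (2 ^ n) := by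
        rw [← pow_add]; ring_nf
      rw [hsplit, Matrix.mul_apply]
      refine Finset.dvd_sum fun k _ => ?_
      have hd : (2 ^ n * 2 ^ n : ℤ) ∣ (C ^ (2 ^ n)) i k * (C ^ (2 ^ n)) k j :=
        mul_dvd_mul (ihn i k) (ihn k j)
      refine dvd_trans ?_ hd
      calc (2 : ℤ) ^ (n + 1) ∣ 2 ^ (n + n) := pow_dvd_pow 2 (by omega)
        _ = 2 ^ n * 2 ^ n := by rw [pow_add]
end

section
/- Let C be a square integer matrix of even size with entries ±1 such that C³ = C². Then C² = 0 and hence C is nilpotent with trace 0. -/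
/-!
Reduced modulo 2, a `±1` matrix is the all-ones matrix `J`, and `(J - 1)² = (N - 2) J + 1 = 1`
for even `N`. Hence `det (C - 1)` is odd, in particular nonzero, and `(C - 1) C² = C³ - C² = 0`
forces `C² = 0`.
-/

namespace Matrix

variable {n R : Type*}

theorem map_intCast_zmod_two_eq_of_one {C : Matrix n n ℤ}
    (hC : ∀ i j, C i j = 1 ∨ C i j = -1) : C.map (Int.cast : ℤ → ZMod 2) = of 1 := by
  ext i j
  rcases hC i j with h | h <;> simp [h]

variable [Fintype n]

theorem of_one_mul_of_one [NonAssocSemiring R] :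
    (of 1 : Matrix n n R) * of 1 = (Fintype.card n : R) • of 1 := by
  ext i j
  simp [mul_apply]

theorem of_one_sub_one_mul_self [DecidableEq n] [Ring R] (h : (Fintype.card n : R) = 2) :
    (of 1 - 1 : Matrix n n R) * (of 1 - 1) = 1 := by
  rw [sub_mul, mul_sub, mul_sub, of_one_mul_of_one, h, two_smul, Matrix.mul_one, Matrix.one_mul,
    Matrix.one_mul]
  abel

theorem odd_det_sub_one_of_forall_eq_one_or_neg_one [DecidableEq n]
    (hn : Even (Fintype.card n)) {C : Matrix n n ℤ} (hC : ∀ i j, C i j = 1 ∨ C i j = -1) :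
    Odd (C - 1).det := by
  have hJ : (of 1 - 1 : Matrix n n (ZMod 2)) * (of 1 - 1) = 1 :=
    of_one_sub_one_mul_self (by rw [(ZMod.natCast_eq_zero_iff_even).mpr hn]; decide)
  have hdet : ((C - 1).det : ZMod 2) * (C - 1).det = 1 := by
    rw [Int.cast_det, Matrix.map_sub _ (Int.cast_sub (R := ZMod 2)),
      Matrix.map_one _ Int.cast_zero Int.cast_one, map_intCast_zmod_two_eq_of_one hC, ← det_mul, hJ,
      det_one]
  have square_eq_one : ∀ d : ZMod 2, d * d = 1 → d = 1 := by decide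
  exact (ZMod.intCast_eq_one_iff_odd).mp (square_eq_one _ hdet)

theorem eq_zero_of_mul_eq_zero_of_det_ne_zero [DecidableEq n] [CommRing R] [IsDomain R]
    {A B : Matrix n n R} (hA : A.det ≠ 0) (h : A * B = 0) : B = 0 :=
  isLeftRegular_iff_nonsingular.mpr (nonsingular_iff_det_ne_zero.mpr hA) <|
    h.trans (mul_zero A).symm

end Matrix

theorem stmt_8 (N : ℕ) (hN : Even N) (C : Matrix (Fin N) (Fin N) ℤ)
    (hpm : ∀ i j, C i j = 1 ∨ C i j = -1)
    (h : C ^ 3 = C ^ 2) :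
    C ^ 2 = 0 ∧ IsNilpotent C ∧ C.trace = 0 := by
  have hodd : Odd (C - 1).det :=
    Matrix.odd_det_sub_one_of_forall_eq_one_or_neg_one (by simpa using hN) hpm
  have hdet : (C - 1).det ≠ 0 := by
    rintro h0
    simp [h0] at hodd
  have hsq : C ^ 2 = 0 :=
    Matrix.eq_zero_of_mul_eq_zero_of_det_ne_zero hdet <| by
      rw [sub_mul, ← pow_succ', h, one_mul, sub_self]
  have hnil : IsNilpotent C := ⟨2, hsq⟩
  exact ⟨hsq, hnil, (Matrix.isNilpotent_trace_of_isNilpotent hnil).eq_zero⟩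
end

section
/- For all positive integers l, t, r with tr ≤ l, there exists a (2l)-by-(2l) real matrix A with A² = A, rank A = r, and every entry of A equal to ±1/(2t). -/
open Finset Matrix

/-- Alternating ±1 sum over an interval of even length starting at an even point is 0. -/
lemma sum_alt_aux (a : ℕ) (ha : Even a) :
    ∀ m : ℕ, ∑ j ∈ Finset.Ico a (a + 2 * m), (if Even j then (1:ℝ) else -1) = 0 := by
  intro m
  induction m with
  | zero => simp
  | succ m ih =>
    have h1 : a + 2 * (m + 1) = (a + 2 * m + 1) + 1 := by ring
    rw [h1, Finset.sum_Ico_succ_top (by omega), Finset.sum_Ico_succ_top (by omega), ih]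
    have he : Even (a + 2 * m) := by
      rcases ha with ⟨c, hc⟩; exact ⟨c + m, by omega⟩
    have ho : ¬ Even (a + 2 * m + 1) := by
      simp [Nat.even_add_one, he]
    simp [he, ho]

theorem stmt_11 (l t r : ℕ) (hl : 0 < l) (ht : 0 < t) (hr : 0 < r)
    (h : t * r ≤ l) :
    ∃ A : Matrix (Fin (2 * l)) (Fin (2 * l)) ℝ,
      A * A = A ∧ A.rank = r ∧
        ∀ i j, A i j = 1 / (2 * t) ∨ A i j = -(1 / (2 * t)) := by
  classical
  set n := 2 * l with hn
  set k := 2 * t with hk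
  have hkpos : 0 < k := by omega
  have htr1 : t * (r - 1) + t = t * r := by
    obtain ⟨m, rfl⟩ : ∃ m, r = m + 1 := ⟨r - 1, by omega⟩
    simp [Nat.mul_succ]
  have hkr1 : k * (r - 1) + k = k * r := by
    have h2 : k * (r - 1) = 2 * (t * (r - 1)) := by rw [hk]; ring
    have h3 : k * r = 2 * (t * r) := by rw [hk]; ring
    omega
  have hkrn : k * r ≤ n := by
    have h3 : k * r = 2 * (t * r) := by rw [hk]; ring
    omega
  have hkr2 : k * r = 2 * (t * r) := by rw [hk]; ring
  -- block assignment
  set β : ℕ → ℕ := fun j => min (j / k) (r - 1) with hβ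
  have hβlt : ∀ j, β j < r := fun j => by
    have : β j ≤ r - 1 := min_le_right _ _
    omega
  -- characterizations of blocks
  have hdiv : ∀ j p : ℕ, (j / k = p ↔ k * p ≤ j ∧ j < k * (p + 1)) := by
    intro j p
    constructor
    · rintro rfl
      refine ⟨?_, ?_⟩
      · calc k * (j / k) = j / k * k := by ring
          _ ≤ j := Nat.div_mul_le_self j k
      · have h2 : j < (j / k + 1) * k := (Nat.div_lt_iff_lt_mul hkpos).1 (Nat.lt_succ_self _)
        calc j < (j / k + 1) * k := h2
          _ = k * (j / k + 1) := by ring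
    · rintro ⟨h1, h2⟩
      have hge : p ≤ j / k := (Nat.le_div_iff_mul_le hkpos).2 (by rw [Nat.mul_comm]; exact h1)
      have hlt : j / k < p + 1 := (Nat.div_lt_iff_lt_mul hkpos).2 (by rw [Nat.mul_comm]; exact h2)
      omega
  have hb1 : ∀ j p : ℕ, p + 1 < r → (β j = p ↔ k * p ≤ j ∧ j < k * (p + 1)) := by
    intro j p hp
    rw [hβ]; simp only
    rw [← hdiv j p]
    generalize j / k = x
    omega
  have hb2 : ∀ j : ℕ, (β j = r - 1 ↔ k * (r - 1) ≤ j) := by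
    intro j
    have hle : r - 1 ≤ j / k ↔ (r - 1) * k ≤ j := Nat.le_div_iff_mul_le hkpos
    rw [hβ]; simp only
    rw [Nat.mul_comm k (r-1), ← hle]
    generalize j / k = x
    omega
  -- the diagonal sign and the alternating sign
  set d : ℕ → ℝ := fun j => if j < l + t * r then 1 else -1 with hd'
  set e : ℕ → ℝ := fun j => if Even j then 1 else -1 with he'
  set X : Matrix (Fin n) (Fin r) ℝ := fun j q => if β (j : ℕ) = (q : ℕ) then d j else e j with hX
  set Y : Matrix (Fin r) (Fin n) ℝ := fun p j => if β (j : ℕ) = (p : ℕ) then (2 * (t:ℝ))⁻¹ else 0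
    with hY
  have htne : (2 * (t:ℝ)) ≠ 0 := by positivity
  -- the key computation : Y * X = 1
  have key : Y * X = 1 := by
    ext p q
    -- block boundaries
    set a := k * (p : ℕ) with ha
    set b := if (p : ℕ) + 1 < r then k * ((p : ℕ) + 1) else n with hb
    have hpa : (p : ℕ) + 1 ≤ r := p.2
    have hab : a ≤ b := by
      rw [hb]; split
      · exact Nat.mul_le_mul_left _ (by omega)
      · calc a ≤ k * r := Nat.mul_le_mul_left _ (by omega)
          _ ≤ n := hkrn
    have hbn : b ≤ n := by
      rw [hb]; split
      · calc k * ((p:ℕ)+1) ≤ k * r := Nat.mul_le_mul_left _ (by omega)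
          _ ≤ n := hkrn
      · exact le_refl _
    have hblock : ∀ j : ℕ, j < n → (β j = (p : ℕ) ↔ a ≤ j ∧ j < b) := by
      intro j hj
      rcases lt_or_ge ((p : ℕ) + 1) r with hp | hp
      · rw [hb, if_pos hp]; exact hb1 j p hp
      · have hpe : (p : ℕ) = r - 1 := by omega
        rw [hb, if_neg (by omega), ha, hpe, hb2 j]
        omega
    -- rewrite matrix entry as a sum over range n
    have entry : (Y * X) p q =
        (2 * (t:ℝ))⁻¹ * ∑ j ∈ Finset.range n,
          (if β j = (p : ℕ) then (if β j = (q : ℕ) then d j else e j) else 0) := by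
      rw [Matrix.mul_apply, Finset.mul_sum]
      rw [← Fin.sum_univ_eq_sum_range
        (fun j => (2 * (t:ℝ))⁻¹ * (if β j = (p:ℕ) then (if β j = (q:ℕ) then d j else e j) else 0))]
      refine Finset.sum_congr rfl fun j _ => ?_
      rw [hY, hX]
      by_cases h1 : β (j : ℕ) = (p : ℕ) <;> simp [h1]
    -- restrict to the block
    have hsum1 : ∑ j ∈ Finset.range n,
          (if β j = (p : ℕ) then (if β j = (q : ℕ) then d j else e j) else 0)
        = ∑ j ∈ Finset.Ico a b, (if β j = (q : ℕ) then d j else e j) := by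
      rw [show Finset.Ico a b = Finset.filter (fun j => β j = (p:ℕ)) (Finset.range n) from ?_]
      · rw [Finset.sum_filter]
      · ext j
        simp only [Finset.mem_Ico, Finset.mem_filter, Finset.mem_range]
        constructor
        · intro hj
          have hjn : j < n := lt_of_lt_of_le hj.2 hbn
          exact ⟨hjn, (hblock j hjn).2 hj⟩
        · intro hj
          exact (hblock j hj.1).1 hj.2
    -- compute the block sum
    rcases eq_or_ne p q with rfl | hpq
    · -- diagonal block : sum of d over the block equals k
      have hsum2 : ∑ j ∈ Finset.Ico a b, (if β j = (p : ℕ) then d j else e j)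
          = ∑ j ∈ Finset.Ico a b, d j := by
        refine Finset.sum_congr rfl fun j hj => ?_
        rw [Finset.mem_Ico] at hj
        rw [if_pos ((hblock j (lt_of_lt_of_le hj.2 hbn)).2 hj)]
      have hsum3 : ∑ j ∈ Finset.Ico a b, d j = (k : ℝ) := by
        rcases lt_or_ge ((p : ℕ) + 1) r with hp | hp
        · -- not the last block: all entries are 1
          have hbv : b = k * ((p:ℕ) + 1) := by rw [hb, if_pos hp]
          have hbc : b ≤ l + t * r := by
            rw [hbv]
            have h5 : k * ((p:ℕ)+1) ≤ k * (r-1) := Nat.mul_le_mul_left _ (by omega)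
            omega
          have : ∀ j ∈ Finset.Ico a b, d j = 1 := by
            intro j hj
            rw [Finset.mem_Ico] at hj
            rw [hd']; simp only
            rw [if_pos (by omega)]
          rw [Finset.sum_congr rfl this, Finset.sum_const, Nat.card_Ico]
          have hba : b - a = k := by
            have hsplit : k * ((p:ℕ)+1) = k * (p:ℕ) + k := by ring
            rw [hbv, ha]; omega
          rw [hba]; simp
        · -- last block
          have hpe : (p : ℕ) = r - 1 := by omega
          have hbv : b = n := by rw [hb, if_neg (by omega)]
          have hav : a = k * (r - 1) := by rw [ha, hpe]
          set c := l + t * r with hc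
          have hac : a ≤ c := by rw [hav, hc]; omega
          have hcb : c ≤ b := by rw [hbv, hc, hn]; omega
          rw [← Finset.sum_Ico_consecutive _ hac hcb]
          have h1 : ∀ j ∈ Finset.Ico a c, d j = 1 := by
            intro j hj
            rw [Finset.mem_Ico] at hj
            rw [hd']; simp only
            rw [if_pos (by omega)]
          have h2 : ∀ j ∈ Finset.Ico c b, d j = -1 := by
            intro j hj
            rw [Finset.mem_Ico] at hj
            rw [hd']; simp only
            rw [if_neg (by omega)]
          rw [Finset.sum_congr rfl h1, Finset.sum_congr rfl h2,
            Finset.sum_const, Finset.sum_const, Nat.card_Ico, Nat.card_Ico]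
          have hca : c - a = l - t * r + k := by rw [hc, hav]; omega
          have hbc2 : b - c = l - t * r := by rw [hbv, hc, hn]; omega
          rw [hca, hbc2]
          simp only [nsmul_eq_mul, mul_one, mul_neg_one]
          generalize l - t * r = w
          push_cast
          ring
      rw [Matrix.one_apply_eq, entry, hsum1, hsum2, hsum3, hk]
      push_cast
      field_simp
    · -- off-diagonal block : alternating sum is 0
      have hpq' : (p : ℕ) ≠ (q : ℕ) := fun hc => hpq (Fin.ext hc)
      have hsum2 : ∑ j ∈ Finset.Ico a b, (if β j = (q : ℕ) then d j else e j)
          = ∑ j ∈ Finset.Ico a b, e j := by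
        refine Finset.sum_congr rfl fun j hj => ?_
        rw [Finset.mem_Ico] at hj
        have : β j = (p : ℕ) := (hblock j (lt_of_lt_of_le hj.2 hbn)).2 hj
        rw [if_neg (by omega)]
      have haeven : Even a := by
        rw [ha, hk]
        exact ⟨t * (p:ℕ), by ring⟩
      have hbeven : Even b := by
        rw [hb]; split
        · exact ⟨t * ((p:ℕ)+1), by rw [hk]; ring⟩
        · exact ⟨l, by rw [hn]; ring⟩
      have hsum3 : ∑ j ∈ Finset.Ico a b, e j = 0 := by
        obtain ⟨m, hm⟩ : ∃ m, b = a + 2 * m := by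
          rcases haeven with ⟨x, hx⟩
          rcases hbeven with ⟨y, hy⟩
          exact ⟨y - x, by omega⟩
        rw [he', hm]
        exact sum_alt_aux a haeven m
      rw [Matrix.one_apply_ne hpq, entry, hsum1, hsum2, hsum3, mul_zero]
  -- assemble the answer
  refine ⟨X * Y, ?_, ?_, ?_⟩
  · have hassoc : (X * Y) * (X * Y) = X * ((Y * X) * Y) := by
      rw [Matrix.mul_assoc, ← Matrix.mul_assoc Y X Y]
    rw [hassoc, key, Matrix.one_mul]
  · have h1 : (X * Y).rank ≤ r := by
      have := Matrix.rank_mul_le_left X Y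
      have h2 := Matrix.rank_le_card_width X
      simpa using this.trans h2
    have hXA : (X * Y) * X = X := by rw [Matrix.mul_assoc, key, Matrix.mul_one]
    have h2 : X.rank ≤ (X * Y).rank := by
      conv_lhs => rw [← hXA]
      exact Matrix.rank_mul_le_left _ _
    have h3 : (r : ℕ) ≤ X.rank := by
      have h4 := Matrix.rank_mul_le_right Y X
      rw [key] at h4
      simpa [Matrix.rank_one] using h4
    omega
  · intro i j
    have hβj : (β (j : ℕ)) < r := hβlt _
    have entry : (X * Y) i j = X i ⟨β (j:ℕ), hβj⟩ * (2 * (t:ℝ))⁻¹ := by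
      rw [Matrix.mul_apply]
      rw [Finset.sum_eq_single (⟨β (j:ℕ), hβj⟩ : Fin r)]
      · rw [hY]; simp
      · intro p _ hp
        have : β (j : ℕ) ≠ (p : ℕ) := by
          intro hc
          exact hp (Fin.ext hc.symm)
        rw [hY]; simp [this]
      · intro habs
        exact absurd (Finset.mem_univ _) habs
    rw [entry]
    have hone : X i ⟨β (j:ℕ), hβj⟩ = 1 ∨ X i ⟨β (j:ℕ), hβj⟩ = -1 := by
      rw [hX, hd', he']; simp only
      split_ifs <;> simp
    rcases hone with h1 | h1 <;> rw [h1]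
    · left; rw [one_div, one_mul]
    · right; rw [one_div, neg_mul, one_mul]
end

section
/- Let l, t, r, m be positive integers (m ≥ 0) with l = tr + m. The (2l)-by-(2l) block matrix A built from 2-by-2 blocks, having r diagonal t-by-t blocks of P's, an m-by-t block of P's in the lower-left corner, and M's elsewhere (P = (1/2t)·[[1,1],[1,1]], M = (1/2t)·[[1,-1],[1,-1]]), satisfies A² = A and trace A = r. -/
/-!
Index the rows and columns of `A` by pairs `(p, a)` with `p < l` a block index and `a : Fin 2`.
With `c = 1/(2t)`, the entry in column `(q, 0)` is always `c`, and in column `(q, 1)` it is `c` or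
`-c` according as the block `(p, q)` is `P` or `M`; in particular rows do not depend on `a`. Hence
in row `(p, a)` of `A²` the two columns `(q, 0), (q, 1)` contribute `2c` times row `q` when block
`(p, q)` is `P`, and cancel otherwise. Each block row `p` has exactly `t` blocks `P`, and for each
of them row `q` equals row `p`, so `A² = 2ct · A = A`. On the diagonal, the pair `(p, 0), (p, 1)` contributes `2c`
exactly for the `tr` indices `p` inside the diagonal blocks, so `trace A = 2c · tr = r`.
-/

open Finset Matrix

section PairSign

variable {ι K : Type*} [CommRing K] (R : ι → ι → Prop) [DecidableRel R] (c : K)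

def pairSignMatrix : Matrix (ι × Fin 2) (ι × Fin 2) K :=
  of fun i j => if R i.1 j.1 then c else if j.2 = 0 then c else -c

lemma pairSignMatrix_apply (i j : ι × Fin 2) :
    pairSignMatrix R c i j = if R i.1 j.1 then c else if j.2 = 0 then c else -c :=
  rfl

lemma pairSignMatrix_row_eq {p q : ι} (h : ∀ k, R p k ↔ R q k) (a b : Fin 2) :
    pairSignMatrix R c (p, a) = pairSignMatrix R c (q, b) := by
  ext j
  simp only [pairSignMatrix_apply, h]

lemma sum_pairSignMatrix_pair (p q : ι) (a : Fin 2) :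
    ∑ b, pairSignMatrix R c (p, a) (q, b) = if R p q then 2 * c else 0 := by
  by_cases h : R p q <;> simp [Fin.sum_univ_two, pairSignMatrix_apply, h, two_mul]

variable [Fintype ι]

theorem pairSignMatrix_mul_self {N : ℕ} (hrow : ∀ p q, R p q → ∀ k, R q k ↔ R p k)
    (hcard : ∀ p, #{q | R p q} = N) (hc : 2 * N * c = 1) :
    pairSignMatrix R c * pairSignMatrix R c = pairSignMatrix R c := by
  ext ⟨p, a⟩ j
  have hpair (q : ι) : ∑ b, pairSignMatrix R c (p, a) (q, b) * pairSignMatrix R c (q, b) j =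
      if R p q then 2 * c * pairSignMatrix R c (p, a) j else 0 := by
    have hq (b : Fin 2) : pairSignMatrix R c (q, b) j = pairSignMatrix R c (q, 0) j :=
      congrFun (pairSignMatrix_row_eq R c (fun _ => Iff.rfl) b 0) j
    simp only [hq, ← sum_mul, sum_pairSignMatrix_pair]
    split_ifs with hpq
    · rw [pairSignMatrix_row_eq R c (hrow p q hpq) 0 a]
    · rw [zero_mul]
  calc (pairSignMatrix R c * pairSignMatrix R c) (p, a) j
      = ∑ q, ∑ b, pairSignMatrix R c (p, a) (q, b) * pairSignMatrix R c (q, b) j := by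
        rw [mul_apply, Fintype.sum_prod_type]
    _ = 2 * N * c * pairSignMatrix R c (p, a) j := by
        rw [sum_congr rfl fun q _ => hpair q, ← sum_filter, sum_const, hcard, nsmul_eq_mul]
        ring
    _ = pairSignMatrix R c (p, a) j := by rw [hc, one_mul]

theorem trace_pairSignMatrix : trace (pairSignMatrix R c) = 2 * c * #{p | R p p} := by
  have hdiag (p : ι) : ∑ b, pairSignMatrix R c (p, b) (p, b) = if R p p then 2 * c else 0 := by
    rw [← sum_pairSignMatrix_pair R c p p 0]
    exact sum_congr rfl fun b _ => congrFun (pairSignMatrix_row_eq R c (fun _ => Iff.rfl) b 0) _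
  rw [trace, Fintype.sum_prod_type]
  simp only [diag_apply, hdiag]
  rw [← sum_filter, sum_const, nsmul_eq_mul, mul_comm]

end PairSign

lemma Fin.card_filter_univ_eq_card_filter_range (l : ℕ) (P : ℕ → Prop) [DecidablePred P] :
    #{q : Fin l | P q} = #{q ∈ range l | P q} := by
  rw [← card_map Fin.valEmbedding]
  congr 1
  ext x
  simp [Fin.exists_iff, and_comm]

def IsPBlock (t r p q : ℕ) : Prop := (p < t * r ∧ q < t * r ∧ p / t = q / t) ∨ (t * r ≤ p ∧ q < t)

instance (t r : ℕ) : DecidableRel (IsPBlock t r) := fun _ _ => by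
  unfold IsPBlock; infer_instance

/-- The block of `t` consecutive columns in which block row `p` has its `P`s. -/
def blockOf (t r p : ℕ) : ℕ := if p < t * r then p / t else 0

section Blocks
variable {t r : ℕ}

lemma isPBlock_iff (ht : 0 < t) (hr : 0 < r) {p q : ℕ} :
    IsPBlock t r p q ↔ q < t * r ∧ q / t = blockOf t r p := by
  have htr : t ≤ t * r := Nat.le_mul_of_pos_right t hr
  unfold IsPBlock blockOf
  split_ifs with hp
  · omega
  · rw [Nat.div_eq_zero_iff]; omega

lemma isPBlock_iff_of_isPBlock (ht : 0 < t) (hr : 0 < r) {p q : ℕ} (h : IsPBlock t r p q)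
    (k : ℕ) : IsPBlock t r q k ↔ IsPBlock t r p k := by
  rw [isPBlock_iff ht hr] at h
  rw [isPBlock_iff ht hr, isPBlock_iff ht hr, ← h.2, blockOf, if_pos h.1]

lemma isPBlock_self_iff (hr : 0 < r) (p : ℕ) : IsPBlock t r p p ↔ p < t * r := by
  have htr : t ≤ t * r := Nat.le_mul_of_pos_right t hr
  unfold IsPBlock
  omega

lemma blockOf_lt (hr : 0 < r) (p : ℕ) : blockOf t r p < r := by
  unfold blockOf
  split_ifs with hp
  · exact Nat.div_lt_of_lt_mul hp
  · exact hr

lemma filter_isPBlock (ht : 0 < t) (hr : 0 < r) {l : ℕ} (hl : t * r ≤ l) (p : ℕ) :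
    {q ∈ range l | IsPBlock t r p q} = Ico (t * blockOf t r p) (t * blockOf t r p + t) := by
  have hk : t * (blockOf t r p + 1) ≤ t * r := Nat.mul_le_mul_left t (blockOf_lt hr p)
  rw [Nat.mul_succ] at hk
  ext q
  simp only [mem_filter, mem_range, mem_Ico, isPBlock_iff ht hr, Nat.div_eq_iff ht,
    Nat.mul_comm (blockOf t r p)]
  omega

end Blocks

theorem stmt_12 (t r m l : ℕ) (ht : 0 < t) (hr : 0 < r)
    (hl : l = t * r + m)
    (A : Matrix (Fin (2 * l)) (Fin (2 * l)) ℝ)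
    (hA : A = Matrix.of fun i j : Fin (2 * l) =>
      if ((i : ℕ) / 2 < t * r ∧ (j : ℕ) / 2 < t * r ∧
            (i : ℕ) / 2 / t = (j : ℕ) / 2 / t) ∨
          (t * r ≤ (i : ℕ) / 2 ∧ (j : ℕ) / 2 < t)
      then (1 / (2 * t) : ℝ)
      else if (j : ℕ) % 2 = 0 then (1 / (2 * t) : ℝ) else -(1 / (2 * t))) :
    A * A = A ∧ A.trace = r := by
  let e : Fin l × Fin 2 ≃ Fin (2 * l) := finProdFinEquiv.trans (finCongr (Nat.mul_comm l 2))
  let R : Fin l → Fin l → Prop := fun p q => IsPBlock t r p q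
  have hA' : A = (pairSignMatrix R (1 / (2 * t) : ℝ)).submatrix e.symm e.symm := by
    ext i j
    simp [hA, pairSignMatrix_apply, e, R, IsPBlock, Fin.ext_iff]
  have hc : 2 * (t : ℕ) * (1 / (2 * t) : ℝ) = 1 := by field_simp
  constructor
  · rw [hA', submatrix_mul_equiv, pairSignMatrix_mul_self R _ ?_ ?_ hc]
    · intro p q h k
      exact isPBlock_iff_of_isPBlock ht hr h k
    · intro p
      rw [Fin.card_filter_univ_eq_card_filter_range, filter_isPBlock ht hr (by omega), Nat.card_Ico]
      omega
  · have htrace (M : Matrix (Fin l × Fin 2) (Fin l × Fin 2) ℝ) :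
        trace (M.submatrix e.symm e.symm) = trace M :=
      e.symm.sum_comp fun x => M x x
    rw [hA', htrace, trace_pairSignMatrix]
    simp only [R, isPBlock_self_iff hr, Fin.card_filter_val_lt]
    rw [min_eq_right (by omega)]
    push_cast
    field_simp
end

section
/- A rank 2 absolutely flat real matrix (all entries ±c, c > 0) has exactly 2 row types and exactly 2 column types, where two rows (columns) are of the same type if they are equal or negatives of each other. -/
/-!
If `u`, `v` are flat (all entries `±c`, `c ≠ 0`) and not of the same type, they agree in some
coordinate `k₁` and are opposite in some coordinate `k₂`. For a flat `w = a • u + b • v`,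
reading off these coordinates gives `|a + b| = 1` and `|a - b| = 1`, so `(a, b)` is one of
`(±1, 0)`, `(0, ±1)` and `w = ±u` or `w = ±v`. The same two coordinates show that `u`, `v` are
linearly independent. As the rows span a plane, not all of them are of one type, and any two of
different types span the whole row space.
-/

open Matrix Submodule Module

def SameType {V : Type*} [Neg V] (u v : V) : Prop := u = v ∨ u = -v

theorem finrank_span_range_le_one_of_sameType {K V ι : Type*} [DivisionRing K] [AddCommGroup V]
    [Module K V] {v : ι → V} (h : ∀ i j, SameType (v i) (v j)) :
    finrank K (span K (Set.range v)) ≤ 1 := by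
  rcases isEmpty_or_nonempty ι with hι | ⟨⟨i₀⟩⟩
  · rw [Set.range_eq_empty, span_empty, finrank_bot]
    exact zero_le_one
  have hle : span K (Set.range v) ≤ K ∙ v i₀ := by
    refine span_le.mpr ?_
    rintro _ ⟨i, rfl⟩
    rcases h i i₀ with h | h <;> rw [h]
    · exact mem_span_singleton_self _
    · exact neg_mem (mem_span_singleton_self _)
  exact (finrank_mono hle).trans ((finrank_span_le_card {v i₀}).trans (by simp))

section Flat

variable {κ : Type*} {c : ℝ} {u v w : κ → ℝ}

theorem exists_eq_and_exists_eq_neg_of_not_sameType (hu : ∀ k, |u k| = c) (hv : ∀ k, |v k| = c)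
    (h : ¬SameType u v) : (∃ k, u k = v k) ∧ ∃ k, u k = -v k := by
  obtain ⟨hne, hne_neg⟩ := not_or.mp h
  have hk (k : κ) : u k = v k ∨ u k = -v k := abs_eq_abs.mp ((hu k).trans (hv k).symm)
  constructor
  · by_contra! h'
    exact hne_neg (funext fun k => (hk k).resolve_left (h' k))
  · by_contra! h'
    exact hne (funext fun k => (hk k).resolve_right (h' k))

theorem abs_eq_one_of_abs_mul_eq {a x : ℝ} (hc : c ≠ 0) (hx : |x| = c) (h : |a * x| = c) :
    |a| = 1 := by
  rwa [abs_mul, hx, mul_eq_right₀ hc] at h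

theorem smul_add_smul_apply_of_eq {a b : ℝ} {k : κ} (h : u k = v k) :
    (a • u + b • v) k = (a + b) * u k := by
  simp only [Pi.add_apply, Pi.smul_apply, smul_eq_mul, h]
  ring

theorem smul_add_smul_apply_of_eq_neg {a b : ℝ} {k : κ} (h : u k = -v k) :
    (a • u + b • v) k = (a - b) * u k := by
  simp only [Pi.add_apply, Pi.smul_apply, smul_eq_mul, h]
  ring

variable (hc : c ≠ 0) (hu : ∀ k, |u k| = c) (hv : ∀ k, |v k| = c) (huv : ¬SameType u v)
include hc hu hv huv

theorem linearIndependent_pair_of_not_sameType : LinearIndependent ℝ ![u, v] := by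
  obtain ⟨⟨k₁, hk₁⟩, ⟨k₂, hk₂⟩⟩ := exists_eq_and_exists_eq_neg_of_not_sameType hu hv huv
  refine LinearIndependent.pair_iff.mpr fun s t hst => ?_
  have hu₁ : u k₁ ≠ 0 := fun h0 => hc (by rw [← hu k₁, h0, abs_zero])
  have hu₂ : u k₂ ≠ 0 := fun h0 => hc (by rw [← hu k₂, h0, abs_zero])
  have hsum : (s + t) * u k₁ = 0 := by
    rw [← smul_add_smul_apply_of_eq hk₁, hst, Pi.zero_apply]
  have hdiff : (s - t) * u k₂ = 0 := by
    rw [← smul_add_smul_apply_of_eq_neg hk₂, hst, Pi.zero_apply]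
  have h₁ := (mul_eq_zero.mp hsum).resolve_right hu₁
  have h₂ := (mul_eq_zero.mp hdiff).resolve_right hu₂
  constructor <;> linarith

theorem sameType_or_sameType_of_mem_span_pair (hw : ∀ k, |w k| = c)
    (hmem : w ∈ span ℝ {u, v}) : SameType w u ∨ SameType w v := by
  obtain ⟨⟨k₁, hk₁⟩, ⟨k₂, hk₂⟩⟩ := exists_eq_and_exists_eq_neg_of_not_sameType hu hv huv
  obtain ⟨a, b, rfl⟩ := mem_span_pair.mp hmem
  have hsum : |a + b| = 1 :=
    abs_eq_one_of_abs_mul_eq hc (hu k₁) (by rw [← smul_add_smul_apply_of_eq hk₁, hw])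
  have hdiff : |a - b| = 1 :=
    abs_eq_one_of_abs_mul_eq hc (hu k₂) (by rw [← smul_add_smul_apply_of_eq_neg hk₂, hw])
  have hab : a = 1 ∧ b = 0 ∨ a = -1 ∧ b = 0 ∨ a = 0 ∧ b = 1 ∨ a = 0 ∧ b = -1 := by
    rcases (abs_eq zero_le_one).mp hsum with hs | hs <;>
      rcases (abs_eq zero_le_one).mp hdiff with hd | hd
    · exact Or.inl ⟨by linarith, by linarith⟩
    · exact Or.inr (Or.inr (Or.inl ⟨by linarith, by linarith⟩))
    · exact Or.inr (Or.inr (Or.inr ⟨by linarith, by linarith⟩))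
    · exact Or.inr (Or.inl ⟨by linarith, by linarith⟩)
  rcases hab with ⟨rfl, rfl⟩ | ⟨rfl, rfl⟩ | ⟨rfl, rfl⟩ | ⟨rfl, rfl⟩ <;> simp [SameType]

end Flat

theorem exists_two_sameType_classes_of_finrank_span_eq_two {ι κ : Type*} {v : ι → κ → ℝ}
    {c : ℝ} (hc : c ≠ 0) (hv : ∀ i k, |v i k| = c)
    (hrank : finrank ℝ (span ℝ (Set.range v)) = 2) :
    ∃ i₁ i₂, ¬SameType (v i₁) (v i₂) ∧ ∀ i, SameType (v i) (v i₁) ∨ SameType (v i) (v i₂) := by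
  obtain ⟨i₁, i₂, h₁₂⟩ : ∃ i₁ i₂, ¬SameType (v i₁) (v i₂) := by
    by_contra! h
    have := finrank_span_range_le_one_of_sameType (K := ℝ) h
    omega
  have hpair : finrank ℝ (span ℝ {v i₁, v i₂}) = 2 := by
    rw [← range_cons_cons_empty _ _ ![],
      finrank_span_eq_card (linearIndependent_pair_of_not_sameType hc (hv i₁) (hv i₂) h₁₂)]
    rfl
  have hle : span ℝ {v i₁, v i₂} ≤ span ℝ (Set.range v) :=
    span_le.mpr (Set.insert_subset (subset_span ⟨i₁, rfl⟩)
      (Set.singleton_subset_iff.mpr (subset_span ⟨i₂, rfl⟩)))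
  have : FiniteDimensional ℝ (span ℝ (Set.range v)) := Module.finite_of_finrank_pos (by omega)
  have hspan := eq_of_le_of_finrank_eq hle (hpair.trans hrank.symm)
  refine ⟨i₁, i₂, h₁₂, fun i => ?_⟩
  refine sameType_or_sameType_of_mem_span_pair hc (hv i₁) (hv i₂) h₁₂ (hv i) ?_
  exact hspan ▸ subset_span ⟨i, rfl⟩

theorem stmt_13 (n : ℕ) (A : Matrix (Fin n) (Fin n) ℝ) (c : ℝ) (hc : 0 < c)
    (hflat : ∀ i j, |A i j| = c) (hrank : A.rank = 2) :
    (∃ i₁ i₂ : Fin n,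
      ¬(A i₁ = A i₂ ∨ A i₁ = -A i₂) ∧
      ∀ i, (A i = A i₁ ∨ A i = -A i₁) ∨ (A i = A i₂ ∨ A i = -A i₂)) ∧
    (∃ j₁ j₂ : Fin n,
      ¬(Aᵀ j₁ = Aᵀ j₂ ∨ Aᵀ j₁ = -Aᵀ j₂) ∧
      ∀ j, (Aᵀ j = Aᵀ j₁ ∨ Aᵀ j = -Aᵀ j₁) ∨
        (Aᵀ j = Aᵀ j₂ ∨ Aᵀ j = -Aᵀ j₂)) := by
  constructor
  · exact exists_two_sameType_classes_of_finrank_span_eq_two hc.ne' hflat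
      (A.rank_eq_finrank_span_row ▸ hrank)
  · exact exists_two_sameType_classes_of_finrank_span_eq_two hc.ne' (fun j i => hflat i j)
      (Aᵀ.rank_eq_finrank_span_row ▸ A.rank_transpose ▸ hrank)
end

section
/- Let n = 2k for a positive even integer k. Up to permutation similarity, signature similarity, and transposition, there is exactly one n-by-n absolutely flat idempotent of rank 2 with constant 1/k. -/
open Matrix

/-- An `(n,k,2)` absolutely flat idempotent. -/
def IsAFI2 (n k : ℕ) (A : Matrix (Fin n) (Fin n) ℝ) : Prop :=
  A * A = A ∧ A.rank = 2 ∧ ∀ i j, A i j = 1 / k ∨ A i j = -(1 / k)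

/-- Equivalence generated by permutation similarity, signature similarity,
and transposition. -/
def AFIEquiv {n : ℕ} (A B : Matrix (Fin n) (Fin n) ℝ) : Prop :=
  ∃ (σ : Equiv.Perm (Fin n)) (ε : Fin n → ℝ), (∀ i, ε i = 1 ∨ ε i = -1) ∧
    (B = Matrix.diagonal ε * (σ.permMatrix ℝ * A * (σ.permMatrix ℝ)ᵀ) *
          Matrix.diagonal ε ∨
     B = Matrix.diagonal ε * (σ.permMatrix ℝ * Aᵀ * (σ.permMatrix ℝ)ᵀ) *
          Matrix.diagonal ε)

/-!
Let `B` be an idempotent of rank 2 with entries `±a`, `a = 1/k`, of size `n = 2k`. Its rows are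
`±a`-vectors spanning a plane, and a `±a`-vector in the span of two independent ones `u, v` is
`±u` or `±v`. After a signature similarity every row is therefore `u` (for the rows in some set
`I`) or `v` (for the others). Reading `B² = B` on these two rows gives
`∑_I u = 1, ∑_{Iᶜ} u = 0, ∑_I v = 0, ∑_{Iᶜ} v = 1`; since `|∑_I u| ≤ |I| a` and
`|∑_{Iᶜ} v| ≤ |Iᶜ| a` with `n a = 2`, this forces `|I| = k`, `u = a` on `I`, `v = a` on `Iᶜ`,
and `v`, `u` take each sign equally often on `I`, `Iᶜ`. So `B` is, up to signature, the blow-up of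
one fixed `4 × 4` sign pattern along a map onto four classes of size `k/2`, and any two such
blow-ups are permutation similar. The blow-up with `k` even is an idempotent of trace, hence
rank, `2`.
-/

open Finset

theorem Matrix.rank_eq_trace_of_mul_self {K n : Type*} [Field K] [Fintype n] [DecidableEq n]
    {A : Matrix n n K} (h : A * A = A) : (A.rank : K) = A.trace := by
  have he : IsIdempotentElem (Matrix.toLin' A) := by
    rw [IsIdempotentElem, Module.End.mul_eq_comp, ← Matrix.toLin'_mul, h]
  rw [← Matrix.trace_toLin'_eq, (LinearMap.IsIdempotentElem.isProj_range _ he).trace]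
  rfl

theorem Matrix.exists_linearIndependent_rows_of_rank_eq_two {K m n : Type*} [Field K] [Finite m]
    [Fintype n] {B : Matrix m n K} (hB : B.rank = 2) {i₀ : m} (h0 : B i₀ ≠ 0) :
    ∃ i₁, LinearIndependent K ![B i₀, B i₁] ∧ ∀ i, B i ∈ Submodule.span K {B i₀, B i₁} := by
  obtain ⟨i₁, hi₁⟩ : ∃ i₁, B i₁ ∉ Submodule.span K {B i₀} := by
    by_contra! hall
    have hle : Submodule.span K (Set.range B.row) ≤ Submodule.span K {B i₀} :=
      Submodule.span_le.mpr (Set.range_subset_iff.mpr hall)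
    have := (Submodule.finrank_mono hle).trans (finrank_span_singleton h0).le
    rw [← rank_eq_finrank_span_row] at this
    omega
  have hli : LinearIndependent K ![B i₀, B i₁] :=
    (LinearIndependent.pair_iff' h0).mpr fun c hc =>
      hi₁ (hc ▸ Submodule.smul_mem _ c (Submodule.mem_span_singleton_self _))
  refine ⟨i₁, hli, fun i => ?_⟩
  have hle : Submodule.span K {B i₀, B i₁} ≤ Submodule.span K (Set.range B.row) :=
    Submodule.span_mono (by rintro _ (rfl | rfl) <;> exact ⟨_, rfl⟩)
  have heq : Submodule.span K {B i₀, B i₁} = Submodule.span K (Set.range B.row) := by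
    refine Submodule.eq_of_le_of_finrank_le hle ?_
    rw [← rank_eq_finrank_span_row, hB, ← Matrix.range_cons_cons_empty _ _ ![],
      finrank_span_eq_card hli]
    simp
  exact heq ▸ Submodule.subset_span ⟨i, rfl⟩

theorem LinearIndependent.ne_smul_of_pair {R M : Type*} [Ring R] [Nontrivial R]
    [AddCommGroup M] [Module R M] {u v : M} (h : LinearIndependent R ![u, v]) (s : R) :
    u ≠ s • v := fun hu =>
  one_ne_zero (LinearIndependent.pair_iff.mp h 1 (-s) (by rw [hu]; simp)).1

theorem LinearIndependent.pair_mul_of_mul_self_eq_one {ι R : Type*} [CommRing R] {u v δ : ι → R}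
    (h : LinearIndependent R ![u, v]) (hδ : δ * δ = 1) : LinearIndependent R ![u * δ, v * δ] := by
  refine LinearIndependent.pair_iff.mpr fun s t hst => LinearIndependent.pair_iff.mp h s t ?_
  calc s • u + t • v = (s • (u * δ) + t • (v * δ)) * δ := by
        rw [add_mul, smul_mul_assoc, smul_mul_assoc, mul_assoc, mul_assoc, hδ, mul_one, mul_one]
    _ = 0 := by rw [hst, zero_mul]

theorem Matrix.diagonal_mul_diagonal_self_of_sign {ι R : Type*} [Fintype ι] [DecidableEq ι] [Ring R]
    {δ : ι → R} (hδ : ∀ i, δ i = 1 ∨ δ i = -1) : diagonal δ * diagonal δ = 1 := by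
  rw [diagonal_mul_diagonal, ← diagonal_one]
  exact congrArg diagonal (funext fun i => by rcases hδ i with h | h <;> simp [h])

theorem Equiv.Perm.permMatrix_mul_mul_transpose {n R : Type*} [Fintype n] [DecidableEq n]
    [NonAssocSemiring R] (σ : Equiv.Perm n) (A : Matrix n n R) :
    σ.permMatrix R * A * (σ.permMatrix R)ᵀ = A.submatrix σ σ := by
  rw [transpose_permMatrix, Equiv.Perm.permMatrix, Equiv.Perm.permMatrix,
    PEquiv.toMatrix_toPEquiv_mul, Equiv.Perm.inv_def, PEquiv.mul_toMatrix_toPEquiv,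
    Equiv.symm_symm]
  rfl

theorem Matrix.submatrix_mul_submatrix_of_card_fiber {α α' β β' ι κ R : Type*} [Fintype ι]
    [Fintype κ] [DecidableEq κ] [NonUnitalNonAssocSemiring R] {c : ι → κ} {m : ℕ}
    (hc : ∀ y, #{x | c x = y} = m) (M : Matrix α κ R) (N : Matrix κ β R) (r : α' → α)
    (s : β' → β) : M.submatrix r c * N.submatrix c s = m • (M * N).submatrix r s := by
  ext i j
  simp only [mul_apply, submatrix_apply, smul_apply, Finset.smul_sum]
  rw [← Finset.sum_fiberwise Finset.univ c]
  refine Finset.sum_congr rfl fun y _ => ?_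
  rw [Finset.sum_congr rfl fun x hx => by rw [(Finset.mem_filter.mp hx).2], Finset.sum_const, hc]

theorem Fintype.exists_card_fiber_eq {ι κ : Type*} [Fintype ι] [Fintype κ] [DecidableEq κ]
    {m : ℕ} (h : Fintype.card ι = Fintype.card κ * m) : ∃ c : ι → κ, ∀ y, #{i | c i = y} = m := by
  let e : ι ≃ κ × Fin m := Fintype.equivOfCardEq (by simp [h])
  refine ⟨fun i => (e i).1, fun y => ?_⟩
  have hfiber : ({i | (e i).1 = y} : Finset ι) = ({y} ×ˢ univ).map e.symm.toEmbedding := by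
    ext i
    simp only [mem_filter, mem_univ, true_and, mem_map_equiv, Equiv.symm_symm, mem_product,
      mem_singleton, and_true]
  simp [hfiber]

theorem Function.exists_perm_comp_eq_of_card_fiber_eq {α κ : Type*} [Fintype α] [DecidableEq κ]
    {c c' : α → κ} (h : ∀ y, #{x | c x = y} = #{x | c' x = y}) :
    ∃ σ : Equiv.Perm α, ∀ x, c' (σ x) = c x :=
  ⟨Equiv.ofFiberEquiv fun y => Fintype.equivOfCardEq (by simpa [Fintype.card_subtype] using h y),
    Equiv.ofFiberEquiv_map _⟩

def IsFlat {ι : Type*} (a : ℝ) (u : ι → ℝ) : Prop := ∀ j, u j = a ∨ u j = -a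

namespace IsFlat

variable {ι : Type*} {a : ℝ} {u v w : ι → ℝ}

theorem mul_self (hu : IsFlat a u) (j : ι) : u j * u j = a * a := by
  rcases hu j with h | h <;> simp [h]

theorem apply_le (ha : 0 ≤ a) (hu : IsFlat a u) (j : ι) : u j ≤ a := by
  rcases hu j with h | h <;> linarith

theorem mul_sign (hu : IsFlat a u) {δ : ι → ℝ} (hδ : ∀ j, δ j = 1 ∨ δ j = -1) :
    IsFlat a (u * δ) := fun j => by
  rcases hu j with h | h <;> rcases hδ j with h' | h' <;> simp [h, h']

theorem ite {p : ι → Prop} [DecidablePred p] (hu : IsFlat a u) (hv : IsFlat a v) :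
    IsFlat a fun i => if p i then u i else v i := fun i => by
  dsimp only
  split_ifs
  exacts [hu i, hv i]

theorem eq_or_eq_neg (hu : IsFlat a u) (hv : IsFlat a v) (j : ι) : u j = v j ∨ u j = -v j :=
  mul_self_eq_mul_self_iff.mp ((hu.mul_self j).trans (hv.mul_self j).symm)

theorem eq_one_or_neg_one_of_apply_eq_mul (ha : a ≠ 0) (hu : IsFlat a u) (hw : IsFlat a w)
    {j : ι} {α : ℝ} (h : w j = α * u j) : α = 1 ∨ α = -1 := by
  have : α * α * (a * a) = 1 * (a * a) := by
    linear_combination (-α * α) * hu.mul_self j + hw.mul_self j - (w j + α * u j) * h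
  exact mul_self_eq_one_iff.mp (mul_right_cancel₀ (mul_self_ne_zero.mpr ha) this)

theorem mem_of_mem_span_pair (ha : a ≠ 0) (hu : IsFlat a u) (hv : IsFlat a v) (hw : IsFlat a w)
    (hli : LinearIndependent ℝ ![u, v]) (hspan : w ∈ Submodule.span ℝ {u, v}) :
    w = u ∨ w = -u ∨ w = v ∨ w = -v := by
  obtain ⟨α, β, rfl⟩ := Submodule.mem_span_pair.mp hspan
  obtain ⟨j₀, hj₀⟩ : ∃ j, u j = v j := by
    by_contra! h
    have : (1 : ℝ) • u + (1 : ℝ) • v = 0 := by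
      ext j; simp [(hu.eq_or_eq_neg hv j).resolve_left (h j)]
    simpa using LinearIndependent.pair_iff.mp hli 1 1 this
  obtain ⟨j₁, hj₁⟩ : ∃ j, u j = -v j := by
    by_contra! h
    have : (1 : ℝ) • u + (-1 : ℝ) • v = 0 := by
      ext j; simp [(hu.eq_or_eq_neg hv j).resolve_right (h j)]
    simpa using LinearIndependent.pair_iff.mp hli 1 (-1) this
  have hsum := eq_one_or_neg_one_of_apply_eq_mul ha hu hw (j := j₀) (α := α + β)
    (by simp [hj₀]; ring)
  have hdiff := eq_one_or_neg_one_of_apply_eq_mul ha hu hw (j := j₁) (α := α - β)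
    (by simp [hj₁]; ring)
  rcases hsum with hsum | hsum <;> rcases hdiff with hdiff | hdiff
  · left; rw [show α = 1 by linarith, show β = 0 by linarith]; simp
  · right; right; left; rw [show α = 0 by linarith, show β = 1 by linarith]; simp
  · right; right; right; rw [show α = 0 by linarith, show β = -1 by linarith]; simp
  · right; left; rw [show α = -1 by linarith, show β = 0 by linarith]; simp

theorem sum_eq_card_mul_iff (ha : 0 ≤ a) (hu : IsFlat a u) (s : Finset ι) :
    ∑ j ∈ s, u j = #s * a ↔ ∀ j ∈ s, u j = a := by
  rw [← nsmul_eq_mul, ← Finset.sum_const]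
  exact Finset.sum_eq_sum_iff_of_le fun j _ => hu.apply_le ha j

theorem card_filter_eq_of_sum_eq_zero (ha : a ≠ 0) (hu : IsFlat a u) {s : Finset ι}
    (hs : ∑ j ∈ s, u j = 0) : #{j ∈ s | u j = a} = #{j ∈ s | ¬u j = a} := by
  have hneg : ∀ j ∈ s.filter (¬u · = a), u j = -a := fun j hj =>
    (hu j).resolve_left (Finset.mem_filter.mp hj).2
  rw [← Finset.sum_filter_add_sum_filter_not s (u · = a),
    Finset.sum_congr rfl fun j hj => (Finset.mem_filter.mp hj).2, Finset.sum_congr rfl hneg] at hs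
  simp only [Finset.sum_const, nsmul_eq_mul] at hs
  have : (#{j ∈ s | u j = a} : ℝ) * a = #{j ∈ s | ¬u j = a} * a := by linear_combination hs
  exact_mod_cast mul_right_cancel₀ ha this

theorem two_mul_card_filter_of_sum_eq_zero (ha : a ≠ 0) (hu : IsFlat a u) {s : Finset ι}
    (hs : ∑ j ∈ s, u j = 0) (b : Bool) : 2 * #{j ∈ s | decide (u j = a) = b} = #s := by
  have hhalf := hu.card_filter_eq_of_sum_eq_zero ha hs
  have hsplit : #{j ∈ s | u j = a} + #{j ∈ s | ¬u j = a} = #s :=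
    Finset.card_filter_add_card_filter_not _
  cases b <;> simp only [decide_eq_true_eq, decide_eq_false_iff_not] <;> omega

theorem eq_on_of_sums_eq_one [Fintype ι] [DecidableEq ι] (ha : 0 < a)
    (hcard : (Fintype.card ι : ℝ) * a = 2) (hu : IsFlat a u) (hv : IsFlat a v) {I : Finset ι}
    (hsu : ∑ j ∈ I, u j = 1) (hsv : ∑ j ∈ Iᶜ, v j = 1) :
    (∀ j ∈ I, u j = a) ∧ (∀ j ∈ Iᶜ, v j = a) ∧ 2 * #I = Fintype.card ι ∧
      2 * #Iᶜ = Fintype.card ι := by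
  have hsplit : (#I : ℝ) + #Iᶜ = Fintype.card ι := by exact_mod_cast Finset.card_add_card_compl I
  have hle₁ := Finset.sum_le_card_nsmul I u a fun j _ => hu.apply_le ha.le j
  have hle₂ := Finset.sum_le_card_nsmul Iᶜ v a fun j _ => hv.apply_le ha.le j
  rw [nsmul_eq_mul] at hle₁ hle₂
  have hI : (#I : ℝ) * a = 1 := by nlinarith
  have hIc : (#Iᶜ : ℝ) * a = 1 := by nlinarith
  refine ⟨(hu.sum_eq_card_mul_iff ha.le I).mp (by linarith),
    (hv.sum_eq_card_mul_iff ha.le Iᶜ).mp (by linarith), ?_, ?_⟩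
  all_goals
    refine Nat.cast_injective (R := ℝ) (mul_right_cancel₀ ha.ne' ?_)
    push_cast
    linarith

end IsFlat

/-- Ordering `Bool × Bool` as `tt, tf, ft, ff`, this is
`!![1, 1, 1, -1; 1, 1, 1, -1; 1, -1, 1, 1; 1, -1, 1, 1]`. -/
def flatPattern : Matrix (Bool × Bool) (Bool × Bool) ℝ :=
  Matrix.of fun x y => if x.1 = y.1 ∨ y.2 then 1 else -1

theorem flatPattern_mul_self : flatPattern * flatPattern = (2 : ℝ) • flatPattern := by
  ext ⟨a, b⟩ ⟨c, d⟩
  cases a <;> cases b <;> cases c <;> cases d <;>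
    simp [flatPattern, mul_apply, Fintype.sum_prod_type] <;> norm_num

theorem flatPattern_apply_self (x : Bool × Bool) : flatPattern x x = 1 := by
  simp [flatPattern]

theorem flatPattern_eq_one_or_neg_one (x y : Bool × Bool) :
    flatPattern x y = 1 ∨ flatPattern x y = -1 := by
  simp only [flatPattern, of_apply]; split_ifs <;> simp

def rowPattern {ι R : Type*} [DecidableEq ι] (I : Finset ι) (u v : ι → R) : Matrix ι ι R :=
  Matrix.of fun i => if i ∈ I then u else v

section rowPattern

variable {ι R : Type*} [DecidableEq ι] {I : Finset ι} {u v : ι → R}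

theorem rowPattern_of_mem {i : ι} (h : i ∈ I) : rowPattern I u v i = u := if_pos h

theorem rowPattern_of_notMem {i : ι} (h : i ∉ I) : rowPattern I u v i = v := if_neg h

variable [Fintype ι] [Ring R]

theorem mul_rowPattern_apply (M : Matrix ι ι R) (i : ι) :
    (M * rowPattern I u v) i = (∑ t ∈ I, M i t) • u + (∑ t ∈ Iᶜ, M i t) • v := by
  ext j
  simp only [mul_apply, Pi.add_apply, Pi.smul_apply, smul_eq_mul, Finset.sum_mul]
  rw [← Finset.sum_add_sum_compl I]
  congr 1 <;> refine Finset.sum_congr rfl fun t ht => ?_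
  · rw [rowPattern_of_mem ht]
  · rw [rowPattern_of_notMem (Finset.mem_compl.mp ht)]

theorem rowPattern_sums_of_mul_self (hM : rowPattern I u v * rowPattern I u v = rowPattern I u v)
    (hli : LinearIndependent R ![u, v]) {i₀ i₁ : ι} (hi₀ : i₀ ∈ I) (hi₁ : i₁ ∉ I) :
    (∑ t ∈ I, u t = 1 ∧ ∑ t ∈ Iᶜ, u t = 0) ∧ (∑ t ∈ I, v t = 0 ∧ ∑ t ∈ Iᶜ, v t = 1) := by
  have hrow := mul_rowPattern_apply (I := I) (u := u) (v := v) (rowPattern I u v)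
  rw [hM] at hrow
  have h₀ := hrow i₀
  have h₁ := hrow i₁
  rw [rowPattern_of_mem hi₀] at h₀
  rw [rowPattern_of_notMem hi₁] at h₁
  constructor
  · exact hli.eq_of_pair (by rw [one_smul, zero_smul, add_zero, ← h₀])
  · exact hli.eq_of_pair (by rw [one_smul, zero_smul, zero_add, ← h₁])

end rowPattern

theorem exists_signature_eq_rowPattern {ι R : Type*} [Fintype ι] [DecidableEq ι] [CommRing R]
    [Nontrivial R] {B : Matrix ι ι R} {u v : ι → R} (hli : LinearIndependent R ![u, v])
    (hrows : ∀ i, B i = u ∨ B i = -u ∨ B i = v ∨ B i = -v) {i₀ i₁ : ι} (h₀ : B i₀ = u)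
    (h₁ : B i₁ = v) :
    ∃ δ : ι → R, (∀ i, δ i = 1 ∨ δ i = -1) ∧ ∃ I : Finset ι, i₀ ∈ I ∧ i₁ ∉ I ∧
      diagonal δ * B * diagonal δ = rowPattern I (u * δ) (v * δ) := by
  classical
  have hsign : ∀ i, ∃ s : R, (s = 1 ∨ s = -1) ∧ (B i = s • u ∨ B i = s • v) := by
    intro i
    rcases hrows i with h | h | h | h
    exacts [⟨1, .inl rfl, .inl (by simp [h])⟩, ⟨-1, .inr rfl, .inl (by simp [h])⟩,
      ⟨1, .inl rfl, .inr (by simp [h])⟩, ⟨-1, .inr rfl, .inr (by simp [h])⟩]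
  choose δ hδ hBδ using hsign
  have hδδ : ∀ i, δ i * δ i = 1 := fun i => by rcases hδ i with h | h <;> simp [h]
  let I : Finset ι := {i | B i = δ i • u}
  have hIc : ∀ i ∉ I, B i = δ i • v := fun i hi =>
    (hBδ i).resolve_left fun h => hi (Finset.mem_filter.mpr ⟨Finset.mem_univ i, h⟩)
  refine ⟨δ, hδ, I, ?_, ?_, ?_⟩
  · by_contra hi
    exact hli.ne_smul_of_pair _ (h₀ ▸ hIc i₀ hi)
  · intro hi
    exact (LinearIndependent.pair_symm_iff.mp hli).ne_smul_of_pair _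
      (h₁ ▸ (Finset.mem_filter.mp hi).2)
  · ext i j
    rw [mul_diagonal, diagonal_mul]
    by_cases hi : i ∈ I
    · rw [rowPattern_of_mem hi, (Finset.mem_filter.mp hi).2]
      simp only [Pi.smul_apply, smul_eq_mul, Pi.mul_apply]
      linear_combination (u j * δ j) * hδδ i
    · rw [rowPattern_of_notMem hi, hIc i hi]
      simp only [Pi.smul_apply, smul_eq_mul, Pi.mul_apply]
      linear_combination (v j * δ j) * hδδ i

section blowUp

variable {ι : Type*} [DecidableEq ι] {a : ℝ} {u v : ι → ℝ} {I : Finset ι}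

/-- On a row of `I` the pattern is `u`, constant `a` on `I`, so the only information column `i`
carries is the sign of the other row there; likewise for rows outside `I`. -/
noncomputable def rowPatternType (I : Finset ι) (a : ℝ) (u v : ι → ℝ) (i : ι) : Bool × Bool :=
  (decide (i ∈ I), decide ((if i ∈ I then v i else u i) = a))

theorem rowPattern_eq_submatrix_flatPattern (hu : IsFlat a u) (hv : IsFlat a v)
    (huI : ∀ j ∈ I, u j = a) (hvI : ∀ j ∉ I, v j = a) :
    rowPattern I u v =
      (a • flatPattern).submatrix (rowPatternType I a u v) (rowPatternType I a u v) := by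
  ext i j
  rcases hv.ite (p := (· ∈ I)) hu j with h | h <;> by_cases hi : i ∈ I <;> by_cases hj : j ∈ I <;>
    simp_all [rowPattern, flatPattern, rowPatternType]

variable [Fintype ι]

theorem four_mul_card_fiber_rowPatternType (ha : a ≠ 0) (hu : IsFlat a u) (hv : IsFlat a v)
    (hI : 2 * #I = Fintype.card ι) (hIc : 2 * #Iᶜ = Fintype.card ι)
    (hsu : ∑ t ∈ Iᶜ, u t = 0) (hsv : ∑ t ∈ I, v t = 0) (y : Bool × Bool) :
    4 * #{i | rowPatternType I a u v i = y} = Fintype.card ι := by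
  obtain ⟨b, s⟩ := y
  have hw := hv.ite (p := (· ∈ I)) hu
  set w : ι → ℝ := fun i => if i ∈ I then v i else u i
  obtain ⟨J, hJ, hJcard, hJsum⟩ : ∃ J : Finset ι, ({i | decide (i ∈ I) = b} : Finset ι) = J ∧
      2 * #J = Fintype.card ι ∧ ∑ j ∈ J, w j = 0 := by
    cases b
    · refine ⟨Iᶜ, by ext; simp, hIc, ?_⟩
      rw [← hsu]; exact Finset.sum_congr rfl fun j hj => if_neg (Finset.mem_compl.mp hj)
    · refine ⟨I, by ext; simp, hI, ?_⟩
      rw [← hsv]; exact Finset.sum_congr rfl fun j hj => if_pos hj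
  have hfib : ({i | rowPatternType I a u v i = (b, s)} : Finset ι) =
      {j ∈ J | decide (w j = a) = s} := by
    rw [← hJ, Finset.filter_filter]
    simp only [rowPatternType, Prod.mk.injEq]
    rfl
  rw [hfib]
  have := hw.two_mul_card_filter_of_sum_eq_zero ha hJsum s
  omega

end blowUp

theorem exists_signature_eq_submatrix_flatPattern {ι : Type*} [Fintype ι] [DecidableEq ι]
    {a : ℝ} (ha : 0 < a) (hcard : (Fintype.card ι : ℝ) * a = 2) {B : Matrix ι ι ℝ}
    (hidem : B * B = B) (hrank : B.rank = 2) (hflat : ∀ i, IsFlat a (B i)) :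
    ∃ δ : ι → ℝ, (∀ i, δ i = 1 ∨ δ i = -1) ∧ ∃ c : ι → Bool × Bool,
      (∀ y, 4 * #{i | c i = y} = Fintype.card ι) ∧
      diagonal δ * B * diagonal δ = (a • flatPattern).submatrix c c := by
  obtain ⟨i₀⟩ : Nonempty ι :=
    Fintype.card_pos_iff.mp (Nat.pos_of_ne_zero fun h => by simp [h] at hcard)
  have h0 : B i₀ ≠ 0 := fun h => by
    rcases hflat i₀ i₀ with h' | h' <;> simp [h] at h' <;> linarith
  obtain ⟨i₁, hli, hspan⟩ := B.exists_linearIndependent_rows_of_rank_eq_two hrank h0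
  have hrows i := (hflat i₀).mem_of_mem_span_pair ha.ne' (hflat i₁) (hflat i) hli (hspan i)
  obtain ⟨δ, hδ, I, hi₀, hi₁, hB⟩ := exists_signature_eq_rowPattern hli hrows rfl rfl
  have hDD := diagonal_mul_diagonal_self_of_sign hδ
  have hidem' : rowPattern I (B i₀ * δ) (B i₁ * δ) * rowPattern I (B i₀ * δ) (B i₁ * δ) =
      rowPattern I (B i₀ * δ) (B i₁ * δ) := by
    rw [← hB]
    simp only [← mul_assoc]
    rw [mul_assoc _ (diagonal δ) (diagonal δ), hDD, mul_one, mul_assoc _ B B, hidem]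
  have hli' := hli.pair_mul_of_mul_self_eq_one (δ := δ)
    (funext fun i => by rcases hδ i with h | h <;> simp [h])
  obtain ⟨⟨hsu, hsu'⟩, hsv, hsv'⟩ := rowPattern_sums_of_mul_self hidem' hli' hi₀ hi₁
  have hu := (hflat i₀).mul_sign hδ
  have hv := (hflat i₁).mul_sign hδ
  obtain ⟨huI, hvI, hI, hIc⟩ := hu.eq_on_of_sums_eq_one ha hcard hv hsu hsv'
  refine ⟨δ, hδ, _, four_mul_card_fiber_rowPatternType ha.ne' hu hv hI hIc hsu' hsv, ?_⟩
  rw [hB, rowPattern_eq_submatrix_flatPattern hu hv huI fun j hj => hvI j (mem_compl.mpr hj)]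

theorem isAFI2_submatrix_flatPattern {k m : ℕ} (hk : 0 < k) (hkm : k = m + m)
    {c : Fin (2 * k) → Bool × Bool} (hc : ∀ y, #{i | c i = y} = m) :
    IsAFI2 (2 * k) k (((1 / k : ℝ) • flatPattern).submatrix c c) := by
  have hkm' : (k : ℝ) = m + m := by exact_mod_cast hkm
  set A := ((1 / k : ℝ) • flatPattern).submatrix c c with hA
  have hidem : A * A = A := by
    rw [hA, submatrix_mul_submatrix_of_card_fiber hc, smul_mul_smul_comm, flatPattern_mul_self]
    ext i j
    simp only [Matrix.smul_apply, submatrix_apply]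
    simp only [smul_eq_mul, nsmul_eq_mul]
    field_simp
    rw [hkm']
    ring
  refine ⟨hidem, ?_, fun i j => ?_⟩
  · have htrace : A.trace = 2 := by
      simp only [hA, Matrix.trace, diag_apply, submatrix_apply, Matrix.smul_apply,
        flatPattern_apply_self, smul_eq_mul, mul_one, Finset.sum_const, Finset.card_univ,
        Fintype.card_fin, nsmul_eq_mul]
      field_simp
      push_cast
      ring
    exact_mod_cast (rank_eq_trace_of_mul_self hidem).trans htrace
  · rcases flatPattern_eq_one_or_neg_one (c i) (c j) with h | h <;> simp [hA, h]

theorem afiEquiv_submatrix_of_card_fiber_eq {n : ℕ} {κ : Type*} [DecidableEq κ]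
    {M : Matrix κ κ ℝ} {c c₀ : Fin n → κ} (hc : ∀ y, #{i | c i = y} = #{i | c₀ i = y})
    {δ : Fin n → ℝ} (hδ : ∀ i, δ i = 1 ∨ δ i = -1) {B : Matrix (Fin n) (Fin n) ℝ}
    (hB : diagonal δ * B * diagonal δ = M.submatrix c c) : AFIEquiv (M.submatrix c₀ c₀) B := by
  obtain ⟨σ, hσ⟩ := Function.exists_perm_comp_eq_of_card_fiber_eq hc
  have hDD := diagonal_mul_diagonal_self_of_sign hδ
  refine ⟨σ, δ, hδ, Or.inl ?_⟩
  rw [Equiv.Perm.permMatrix_mul_mul_transpose, submatrix_submatrix,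
    show c₀ ∘ σ = c from funext hσ, ← hB]
  simp only [← mul_assoc, hDD, one_mul]
  rw [mul_assoc, hDD, mul_one]

theorem stmt_15 (k : ℕ) (hk : 0 < k) (hke : Even k) :
    ∃ A : Matrix (Fin (2 * k)) (Fin (2 * k)) ℝ, IsAFI2 (2 * k) k A ∧
      ∀ B : Matrix (Fin (2 * k)) (Fin (2 * k)) ℝ, IsAFI2 (2 * k) k B →
        AFIEquiv A B := by
  obtain ⟨m, hkm⟩ := hke
  obtain ⟨c₀, hc₀⟩ := Fintype.exists_card_fiber_eq (ι := Fin (2 * k)) (κ := Bool × Bool) (m := m)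
    (by rw [Fintype.card_fin, Fintype.card_prod, Fintype.card_bool]; omega)
  refine ⟨_, isAFI2_submatrix_flatPattern hk hkm hc₀, fun B ⟨hidem, hrank, hflat⟩ => ?_⟩
  have hcard : (Fintype.card (Fin (2 * k)) : ℝ) * (1 / k) = 2 := by
    rw [Fintype.card_fin]; push_cast; field_simp
  obtain ⟨δ, hδ, c, hc, hB⟩ :=
    exists_signature_eq_submatrix_flatPattern (by positivity) hcard hidem hrank hflat
  refine afiEquiv_submatrix_of_card_fiber_eq (fun y => ?_) hδ hB
  have := hc y
  rw [hc₀ y, Fintype.card_fin] at *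
  omega
end

section
/- A matrix in the standard block form (\ref{normalform}) with nonnegative parameters a, b, c, a_p, b_p, c_{1p}, c_{2p} satisfying a - b = k, b + c = u, a_p = b_p + k/2, and c_{1p} = c_{2p} + k/2 (where n = a + b + 2c and u = (n-k)/2) is an n-by-n absolutely flat idempotent of rank 2 with constant 1/k. -/
/-!
Write `s` for the column of row signs, `f` for the column pattern `(+1, -1, 0, 0)` and `g` for
`(0, 0, +1, -1)` on the four column blocks. Then `A = (1/k) (𝟙 fᵀ + s gᵀ) = B C` with
`B = [𝟙 s]` of size `n × 2` and `C = (1/k) [f g]ᵀ`. Counting signs block by block,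
`⟨f, 𝟙⟩ = a - b`, `⟨f, s⟩ = (2 a_p - a) - (2 b_p - b)`, `⟨g, 𝟙⟩ = 0` and
`⟨g, s⟩ = 2 c_{1p} - 2 c_{2p}`, so the relations between the parameters say exactly `C B = I₂`.
Hence `A² = B (C B) C = A`, and `rank A = 2` since `I₂ = (C B)² = C A B`.
-/

open Matrix Finset

namespace Matrix

variable {K m n : Type*} [Field K] [Fintype m] [Fintype n] [DecidableEq m]

theorem mul_mul_self_eq_of_mul_eq_one {B : Matrix n m K} {C : Matrix m n K} (h : C * B = 1) :
    B * C * (B * C) = B * C := by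
  rw [Matrix.mul_assoc, ← Matrix.mul_assoc C, h, Matrix.one_mul]

theorem rank_mul_eq_card_of_mul_eq_one {B : Matrix n m K} {C : Matrix m n K} (h : C * B = 1) :
    (B * C).rank = Fintype.card m := by
  refine le_antisymm ((rank_mul_le_left B C).trans (rank_le_card_width B)) ?_
  calc Fintype.card m = (C * B * (C * B)).rank := by rw [h, Matrix.one_mul, rank_one]
    _ = (C * (B * C) * B).rank := by simp only [Matrix.mul_assoc]
    _ ≤ (C * (B * C)).rank := rank_mul_le_left _ _
    _ ≤ (B * C).rank := rank_mul_le_right _ _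

theorem mul_self_and_rank_vecMulVec_add_vecMulVec {x y f g : n → K}
    (hfx : f ⬝ᵥ x = 1) (hfy : f ⬝ᵥ y = 0) (hgx : g ⬝ᵥ x = 0) (hgy : g ⬝ᵥ y = 1) :
    let A := vecMulVec x f + vecMulVec y g
    A * A = A ∧ A.rank = 2 := by
  set B : Matrix n (Fin 2) K := of fun i => ![x i, y i]
  set C : Matrix (Fin 2) n K := of ![f, g]
  have hA : vecMulVec x f + vecMulVec y g = B * C := by
    ext i j
    simp [B, C, mul_apply, Fin.sum_univ_two, vecMulVec_apply]
  have hCB : C * B = 1 := by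
    ext s t
    fin_cases s <;> fin_cases t
    · simpa [B, C, mul_apply, dotProduct] using hfx
    · simpa [B, C, mul_apply, dotProduct] using hfy
    · simpa [B, C, mul_apply, dotProduct] using hgx
    · simpa [B, C, mul_apply, dotProduct] using hgy
  simp only [hA]
  exact ⟨mul_mul_self_eq_of_mul_eq_one hCB,
    by rw [rank_mul_eq_card_of_mul_eq_one hCB, Fintype.card_fin]⟩

end Matrix

section Blocks

variable (a b c : ℕ)

def blockFun (w₁ w₂ w₃ w₄ : ℝ) (m : ℕ) : ℝ :=
  if m < a then w₁ else if m < a + b then w₂ else if m < a + b + c then w₃ else w₄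

def rowSign (p₁ p₂ p₃ p₄ : ℕ) (m : ℕ) : ℝ :=
  if m < p₁ ∨ (a ≤ m ∧ m < a + p₂) ∨ (a + b ≤ m ∧ m < a + b + p₃) ∨
      (a + b + c ≤ m ∧ m < a + b + c + p₄) then 1 else -1

theorem sum_range_blockFun_mul (d : ℕ) (w₁ w₂ w₃ w₄ : ℝ) (t : ℕ → ℝ) :
    ∑ m ∈ range (a + b + c + d), blockFun a b c w₁ w₂ w₃ w₄ m * t m =
      w₁ * ∑ m ∈ Ico 0 a, t m + w₂ * ∑ m ∈ Ico a (a + b), t m +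
        w₃ * ∑ m ∈ Ico (a + b) (a + b + c), t m +
          w₄ * ∑ m ∈ Ico (a + b + c) (a + b + c + d), t m := by
  have block {p q : ℕ} {w : ℝ} (h : ∀ m ∈ Ico p q, blockFun a b c w₁ w₂ w₃ w₄ m = w) :
      ∑ m ∈ Ico p q, blockFun a b c w₁ w₂ w₃ w₄ m * t m = w * ∑ m ∈ Ico p q, t m := by
    rw [mul_sum]
    exact sum_congr rfl fun m hm => by rw [h m hm]
  rw [range_eq_Ico, ← sum_Ico_consecutive _ (Nat.zero_le (a + b + c)) (Nat.le_add_right _ d),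
    ← sum_Ico_consecutive _ (Nat.zero_le (a + b)) (Nat.le_add_right _ c),
    ← sum_Ico_consecutive _ (Nat.zero_le a) (Nat.le_add_right _ b)]
  rw [block (w := w₁), block (w := w₂), block (w := w₃), block (w := w₄)] <;>
  · intro m hm
    rw [mem_Ico] at hm
    unfold blockFun
    split_ifs <;> first | rfl | omega

theorem sum_Ico_eq_of_eq_sign {s r q : ℕ} (hsr : s ≤ r) (hrq : r ≤ q) {t : ℕ → ℝ}
    (ht : ∀ m ∈ Ico s q, t m = if m < r then 1 else -1) :
    ∑ m ∈ Ico s q, t m = ((r : ℝ) - s) - (q - r) := by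
  rw [← sum_Ico_consecutive _ hsr hrq, sum_eq_card_nsmul (b := 1), sum_eq_card_nsmul (b := -1)]
  · simp only [Nat.card_Ico, nsmul_eq_mul, Nat.cast_sub hsr, Nat.cast_sub hrq]
    ring
  all_goals
    intro m hm
    rw [mem_Ico] at hm
    rw [ht m (by rw [mem_Ico]; omega)]
    split_ifs <;> first | rfl | omega

variable {a b c}

theorem sum_range_blockFun_mul_rowSign {d p₁ p₂ p₃ p₄ : ℕ} (hp₁ : p₁ ≤ a) (hp₂ : p₂ ≤ b)
    (hp₃ : p₃ ≤ c) (hp₄ : p₄ ≤ d) (w₁ w₂ w₃ w₄ : ℝ) :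
    ∑ m ∈ range (a + b + c + d), blockFun a b c w₁ w₂ w₃ w₄ m * rowSign a b c p₁ p₂ p₃ p₄ m =
      w₁ * (2 * p₁ - a) + w₂ * (2 * p₂ - b) + w₃ * (2 * p₃ - c) + w₄ * (2 * p₄ - d) := by
  rw [sum_range_blockFun_mul, sum_Ico_eq_of_eq_sign (Nat.zero_le p₁) hp₁,
    sum_Ico_eq_of_eq_sign (Nat.le_add_right a p₂) (by omega),
    sum_Ico_eq_of_eq_sign (Nat.le_add_right (a + b) p₃) (by omega),
    sum_Ico_eq_of_eq_sign (Nat.le_add_right (a + b + c) p₄) (by omega)]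
  · push_cast
    ring
  all_goals
    intro m hm
    rw [mem_Ico] at hm
    unfold rowSign
    split_ifs <;> first | rfl | omega

theorem blockFun_dotProduct_one (d : ℕ) (w₁ w₂ w₃ w₄ : ℝ) :
    (fun j : Fin (a + b + c + d) => blockFun a b c w₁ w₂ w₃ w₄ j) ⬝ᵥ (fun _ => 1) =
      w₁ * a + w₂ * b + w₃ * c + w₄ * d := by
  simp only [dotProduct, mul_one]
  rw [Fin.sum_univ_eq_sum_range (blockFun a b c w₁ w₂ w₃ w₄)]
  simpa using sum_range_blockFun_mul a b c d w₁ w₂ w₃ w₄ fun _ => 1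

theorem blockFun_dotProduct_rowSign {d p₁ p₂ p₃ p₄ : ℕ} (hp₁ : p₁ ≤ a) (hp₂ : p₂ ≤ b)
    (hp₃ : p₃ ≤ c) (hp₄ : p₄ ≤ d) (w₁ w₂ w₃ w₄ : ℝ) :
    (fun j : Fin (a + b + c + d) => blockFun a b c w₁ w₂ w₃ w₄ j) ⬝ᵥ
        (fun i => rowSign a b c p₁ p₂ p₃ p₄ i) =
      w₁ * (2 * p₁ - a) + w₂ * (2 * p₂ - b) + w₃ * (2 * p₃ - c) + w₄ * (2 * p₄ - d) :=
  (Fin.sum_univ_eq_sum_range (fun m => blockFun a b c w₁ w₂ w₃ w₄ m * rowSign a b c p₁ p₂ p₃ p₄ m)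
    _).trans (sum_range_blockFun_mul_rowSign hp₁ hp₂ hp₃ hp₄ _ _ _ _)

end Blocks

theorem stmt_16_general (k a b c ap bp c1p c2p n : ℕ)
    (hk : 0 < k) (hke : Even k)
    (hn : n = a + b + 2 * c)
    (hab : a = b + k)
    (hap : ap = bp + k / 2) (hc1p : c1p = c2p + k / 2)
    (hbpb : bp ≤ b) (hc1pc : c1p ≤ c)
    (A : Matrix (Fin n) (Fin n) ℝ)
    (hA : A = Matrix.of fun i j : Fin n =>
      (1 / k : ℝ) *
        (if (j : ℕ) < a then 1
         else if (j : ℕ) < a + b then -1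
         else
           (if (i : ℕ) < ap ∨ (a ≤ (i : ℕ) ∧ (i : ℕ) < a + bp) ∨
               (a + b ≤ (i : ℕ) ∧ (i : ℕ) < a + b + c1p) ∨
               (a + b + c ≤ (i : ℕ) ∧ (i : ℕ) < a + b + c + c2p)
            then 1 else -1) *
           (if (j : ℕ) < a + b + c then 1 else -1))) :
    A * A = A ∧ A.rank = 2 ∧ ∀ i j, A i j = 1 / k ∨ A i j = -(1 / k) := by
  have hentries : ∀ i j, A i j = 1 / k ∨ A i j = -(1 / k) := by
    intro i j
    rw [hA, of_apply]
    split_ifs <;> simp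
  obtain rfl : n = a + b + c + c := by omega
  set x : Fin (a + b + c + c) → ℝ := fun _ => 1
  set y : Fin (a + b + c + c) → ℝ := fun i => rowSign a b c ap bp c1p c2p i
  set f : Fin (a + b + c + c) → ℝ := (1 / k : ℝ) • fun j : Fin _ => blockFun a b c 1 (-1) 0 0 j
  set g : Fin (a + b + c + c) → ℝ := (1 / k : ℝ) • fun j : Fin _ => blockFun a b c 0 0 1 (-1) j
  have hA_outer : A = vecMulVec x f + vecMulVec y g := by
    ext i j
    simp only [hA, of_apply, Matrix.add_apply, vecMulVec_apply, x, y, f, g, Pi.smul_apply,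
      smul_eq_mul, blockFun, rowSign]
    split_ifs <;> ring
  have hsign := blockFun_dotProduct_rowSign (by omega : ap ≤ a) hbpb hc1pc (by omega : c2p ≤ c)
  obtain ⟨h, rfl⟩ := hke
  have hK : ((h + h : ℕ) : ℝ) ≠ 0 := by exact_mod_cast hk.ne'
  have hbio : f ⬝ᵥ x = 1 ∧ f ⬝ᵥ y = 0 ∧ g ⬝ᵥ x = 0 ∧ g ⬝ᵥ y = 1 := by
    rw [show (h + h) / 2 = h by omega] at hap hc1p
    subst hab hap hc1p
    refine ⟨?_, ?_, ?_, ?_⟩ <;>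
    · simp only [f, g, x, y, smul_dotProduct, smul_eq_mul, blockFun_dotProduct_one, hsign]
      field_simp
      push_cast
      ring
  obtain ⟨hAA, hrank⟩ :=
    mul_self_and_rank_vecMulVec_add_vecMulVec hbio.1 hbio.2.1 hbio.2.2.1 hbio.2.2.2
  rw [hA_outer] at hentries ⊢
  exact ⟨hAA, hrank, hentries⟩

theorem stmt_16 (k a b c ap bp c1p c2p u n : ℕ)
    (hk : 0 < k) (hke : Even k)
    (hn : n = a + b + 2 * c) (hu : n = k + 2 * u)
    (hab : a = b + k) (hbc : b + c = u)
    (hap : ap = bp + k / 2) (hc1p : c1p = c2p + k / 2)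
    (hapa : ap ≤ a) (hbpb : bp ≤ b) (hc1pc : c1p ≤ c) (hc2pc : c2p ≤ c)
    (A : Matrix (Fin n) (Fin n) ℝ)
    (hA : A = Matrix.of fun i j : Fin n =>
      (1 / k : ℝ) *
        (if (j : ℕ) < a then 1
         else if (j : ℕ) < a + b then -1
         else
           (if (i : ℕ) < ap ∨ (a ≤ (i : ℕ) ∧ (i : ℕ) < a + bp) ∨
               (a + b ≤ (i : ℕ) ∧ (i : ℕ) < a + b + c1p) ∨
               (a + b + c ≤ (i : ℕ) ∧ (i : ℕ) < a + b + c + c2p)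
            then 1 else -1) *
           (if (j : ℕ) < a + b + c then 1 else -1))) :
    A * A = A ∧ A.rank = 2 ∧ ∀ i j, A i j = 1 / k ∨ A i j = -(1 / k) :=
  stmt_16_general k a b c ap bp c1p c2p n hk hke hn hab hap hc1p hbpb hc1pc A hA
end

section
/- All nonnegative integer solutions (a_p, a_m, b_p, b_m, c_{1p}, c_{1m}, c_{2p}, c_{2m}) of the system a_p - b_p = k/2, c_{1p} - c_{2p} = k/2, a_p + a_m - b_p - b_m = k, c_{1p} + c_{1m} = c_{2p} + c_{2m}, b + c = u (with a = a_p + a_m, b = b_p + b_m, c = c_{1p} + c_{1m} = c_{2p} + c_{2m}) are parametrized as a_p = k/2 + t, a_m = ⌈n/4⌉ - l, b_p = t, b_m = ⌈m/2⌉ - l, c_{1p} = k/2 + q, c_{1m} = ⌊m/2⌋ - q - t + l, c_{2p} = q, c_{2m} = ⌊n/4⌋ - q - t + l, where t, q are nonnegative integers and l is an integer with q + t - ⌊m/2⌋ ≤ l ≤ ⌈m/2⌉. -/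
theorem stmt_17 (k m n u : ℤ) (hk : 0 < k) (hke : Even k) (hm : 0 ≤ m)
    (hn : n = 2 * k + 2 * m) (hu : u = (n - k) / 2)
    (ap am bp bm c1p c1m c2p c2m : ℤ)
    (hap : 0 ≤ ap) (ham : 0 ≤ am) (hbp : 0 ≤ bp) (hbm : 0 ≤ bm)
    (hc1p : 0 ≤ c1p) (hc1m : 0 ≤ c1m) (hc2p : 0 ≤ c2p) (hc2m : 0 ≤ c2m) :
    (ap - bp = k / 2 ∧ c1p - c2p = k / 2 ∧
     ap + am - bp - bm = k ∧ c1p + c1m = c2p + c2m ∧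
     (bp + bm) + (c1p + c1m) = u) ↔
    ∃ t q l : ℤ, 0 ≤ t ∧ 0 ≤ q ∧
      q + t - m / 2 ≤ l ∧ l ≤ (m + 1) / 2 ∧
      ap = k / 2 + t ∧ am = (n + 3) / 4 - l ∧
      bp = t ∧ bm = (m + 1) / 2 - l ∧
      c1p = k / 2 + q ∧ c1m = m / 2 - q - t + l ∧
      c2p = q ∧ c2m = n / 4 - q - t + l := by
  obtain ⟨r, hr⟩ := hke
  constructor
  · rintro ⟨h1, h2, h3, h4, h5⟩
    exact ⟨bp, c2p, (m + 1) / 2 - bm, by omega⟩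
  · rintro ⟨t, q, l, h⟩
    omega
end
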